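/- arXiv:1302.0034 — 7 statements merged into one kernel-verified Lean document; each statement's English description precedes it below -/
import Mathlib

section
/- Let G be a topological group in which the identity has a neighborhood basis of pro-p subgroups (p prime). Every strongly compact element g of G (i.e. g lies in a compact subgroup) has a unique decomposition g = g_u · g_s = g_s · g_u where g_u is topologically unipotent (lim_{n→∞} g_u^{p^n} = 1) and g_s is residually semisimple (of finite order prime to p). -/
/-!
Some power `g ^ N` lies in an open pro-`p` subgroup; writing `N = p ^ a * m` with `p ∤ m`, the
power `g ^ m` is topologically unipotent. As `p ^ (k * φ m) ≡ 1 [MOD m]`, the powers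
`g ^ p ^ (k * φ m)` lie in `⟨g ^ m⟩ * g`, so a cluster point `s` of them in the compact subgroup
commutes with `g`, satisfies `s ^ m = 1` (the limit of `(g ^ m) ^ p ^ (k * φ m)`), and `g * s⁻¹`
lies in the closure of `⟨g ^ m⟩`, whose elements are all topologically unipotent. Conversely, for
any decomposition `g = u * s` with `s ^ L = 1` and `p ∤ L` one has
`g ^ p ^ (k * φ L) = u ^ p ^ (k * φ L) * s → s`, which forces uniqueness.
-/

open Filter Topology

/-- A surrogate definition of a pro-`p` subgroup: a compact subgroup all of whose elements
are topologically `p`-unipotent (i.e. `x ^ p ^ n → 1`). -/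
def IsProPSubgroup (p : ℕ) {G : Type*} [Group G] [TopologicalSpace G] (K : Subgroup G) : Prop :=
  IsCompact (K : Set G) ∧ ∀ x ∈ K, Tendsto (fun n : ℕ => x ^ p ^ n) atTop (𝓝 1)

/-- The neighbourhood filter of `1` has a basis consisting of pro-`p` subgroups. -/
def HasProPBasis (p : ℕ) (G : Type*) [Group G] [TopologicalSpace G] : Prop :=
  ∀ U ∈ 𝓝 (1 : G), ∃ K : Subgroup G,
    IsProPSubgroup p K ∧ (K : Set G) ∈ 𝓝 (1 : G) ∧ (K : Set G) ⊆ U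

/-- `g` lies in a compact subgroup of `G`. -/
def StronglyCompact {G : Type*} [Group G] [TopologicalSpace G] (g : G) : Prop :=
  ∃ K : Subgroup G, IsCompact (K : Set G) ∧ g ∈ K

/-- `g ^ (p ^ n) → 1`. -/
def TopologicallyUnipotent (p : ℕ) {G : Type*} [Group G] [TopologicalSpace G] (g : G) : Prop :=
  Tendsto (fun n : ℕ => g ^ p ^ n) atTop (𝓝 1)

/-- `g` has finite order prime to `p`. -/
def ResiduallySemisimple (p : ℕ) {G : Type*} [Group G] (g : G) : Prop :=
  ∃ N : ℕ, 0 < N ∧ Nat.Coprime N p ∧ g ^ N = 1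

lemma pow_eq_self_of_pow_eq_one_of_modEq {M : Type*} [LeftCancelMonoid M] {s : M} {m n : ℕ}
    (hs : s ^ m = 1) (hn : n ≡ 1 [MOD m]) : s ^ n = s :=
  (pow_eq_pow_iff_modEq.mpr (hn.of_dvd (orderOf_dvd_of_pow_eq_one hs))).trans (pow_one s)

lemma Nat.pow_mul_totient_modEq_one {p m : ℕ} (hpm : p.Coprime m) (k : ℕ) :
    p ^ (k * m.totient) ≡ 1 [MOD m] := by
  simpa [← pow_mul, mul_comm] using (Nat.ModEq.pow_totient hpm).pow k

section

variable {G : Type*} [Group G] [TopologicalSpace G] {p : ℕ}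

lemma TopologicallyUnipotent.of_pow_pow {x : G} {b : ℕ}
    (h : TopologicallyUnipotent p (x ^ p ^ b)) : TopologicallyUnipotent p x := by
  refine (h.comp (tendsto_sub_atTop_nat b)).congr' ?_
  filter_upwards [eventually_ge_atTop b] with n hn
  rw [Function.comp_apply, ← pow_mul, ← pow_add, Nat.add_sub_cancel' hn]

lemma TopologicallyUnipotent.tendsto_pow_pow_mul {u : G} (hu : TopologicallyUnipotent p u)
    {c : ℕ} (hc : 0 < c) : Tendsto (fun k : ℕ => u ^ p ^ (k * c)) atTop (𝓝 1) :=
  hu.comp (tendsto_id.atTop_mul_const' hc)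

lemma Commute.tendsto_mul_pow_pow_mul_totient [ContinuousMul G] {u s : G} (hus : Commute u s)
    (hu : TopologicallyUnipotent p u) {L : ℕ} (hL : 0 < L) (hpL : p.Coprime L) (hs : s ^ L = 1) :
    Tendsto (fun k : ℕ => (u * s) ^ p ^ (k * L.totient)) atTop (𝓝 s) := by
  simpa [hus.mul_pow, pow_eq_self_of_pow_eq_one_of_modEq hs (Nat.pow_mul_totient_modEq_one hpL _)]
    using (hu.tendsto_pow_pow_mul (Nat.totient_pos.mpr hL)).mul_const s

lemma ResiduallySemisimple.eq_of_mul_eq_mul [ContinuousMul G] [T2Space G] {u s u' s' : G}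
    (hs : ResiduallySemisimple p s) (hs' : ResiduallySemisimple p s') (hus : Commute u s)
    (hus' : Commute u' s') (hu : TopologicallyUnipotent p u) (hu' : TopologicallyUnipotent p u')
    (h : u * s = u' * s') : s = s' := by
  obtain ⟨N, hN, hNp, hsN⟩ := hs
  obtain ⟨N', hN', hN'p, hs'N'⟩ := hs'
  have hL : 0 < N * N' := Nat.mul_pos hN hN'
  have hpL : p.Coprime (N * N') := Nat.Coprime.mul_right hNp.symm hN'p.symm
  refine tendsto_nhds_unique (hus.tendsto_mul_pow_pow_mul_totient hu hL hpL ?_) ?_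
  · rw [pow_mul, hsN, one_pow]
  · rw [h]
    exact hus'.tendsto_mul_pow_pow_mul_totient hu' hL hpL (by rw [mul_comm, pow_mul, hs'N', one_pow])

lemma StronglyCompact.exists_pow_mem [IsTopologicalGroup G] {g : G} (hg : StronglyCompact g)
    {H : Subgroup G} (hH : IsOpen (H : Set G)) : ∃ n, 0 < n ∧ g ^ n ∈ H := by
  obtain ⟨K, hK, hgK⟩ := hg
  have : CompactSpace K := isCompact_iff_compactSpace.mp hK
  have : Finite (K ⧸ H.subgroupOf K) :=
    (H.subgroupOf K).quotient_finite_of_isOpen (hH.preimage continuous_subtype_val)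
  obtain ⟨n, hn, -, hgn⟩ := Subgroup.exists_pow_mem_of_relIndex_ne_zero
    (Subgroup.index_ne_zero_of_finite (H := H.subgroupOf K)) hgK
  exact ⟨n, hn, hgn.1⟩

lemma HasProPBasis.exists_coprime_pow_topologicallyUnipotent [IsTopologicalGroup G]
    (hG : HasProPBasis p G) (hp : p.Prime) {g : G} (hg : StronglyCompact g) :
    ∃ m, 0 < m ∧ p.Coprime m ∧ TopologicallyUnipotent p (g ^ m) := by
  obtain ⟨V, hV, hV1, -⟩ := hG Set.univ univ_mem
  obtain ⟨N, hN, hgN⟩ := hg.exists_pow_mem (V.isOpen_of_mem_nhds hV1)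
  refine ⟨ordCompl[p] N, Nat.ordCompl_pos p hN.ne', Nat.coprime_ordCompl hp hN.ne',
    TopologicallyUnipotent.of_pow_pow (b := N.factorization p) (hV.2 _ ?_)⟩
  rwa [← pow_mul, mul_comm, Nat.ordProj_mul_ordCompl_eq_self]

lemma HasProPBasis.topologicallyUnipotent_of_mem_closure_zpowers [IsTopologicalGroup G]
    (hG : HasProPBasis p G) {x y : G} (hx : TopologicallyUnipotent p x)
    (hy : y ∈ closure (Subgroup.zpowers x : Set G)) : TopologicallyUnipotent p y := by
  obtain ⟨V, hV, hV1, -⟩ := hG Set.univ univ_mem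
  obtain ⟨b, hb⟩ := (hx.eventually_mem hV1).exists
  have hclosed : IsClosed {w : G | w ^ p ^ b ∈ V} :=
    (V.isClosed_of_isOpen (V.isOpen_of_mem_nhds hV1)).preimage (continuous_pow _)
  have hzpowers : (Subgroup.zpowers x : Set G) ⊆ {w : G | w ^ p ^ b ∈ V} := by
    rintro - ⟨z, rfl⟩
    change (x ^ z) ^ p ^ b ∈ V
    rw [← zpow_natCast, ← zpow_mul, mul_comm, zpow_mul, zpow_natCast]
    exact V.zpow_mem hb z
  exact TopologicallyUnipotent.of_pow_pow (hV.2 _ (closure_minimal hzpowers hclosed hy))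

lemma HasProPBasis.exists_semisimple_part [IsTopologicalGroup G] [T2Space G]
    (hG : HasProPBasis p G) (hp : p.Prime) {g : G} (hg : StronglyCompact g) :
    ∃ s, Commute g s ∧ ResiduallySemisimple p s ∧ TopologicallyUnipotent p (g * s⁻¹) := by
  obtain ⟨m, hm, hpm, hgm⟩ := hG.exists_coprime_pow_topologicallyUnipotent hp hg
  obtain ⟨K, hK, hgK⟩ := hg
  set c : ℕ → ℕ := fun k => p ^ (k * m.totient)
  have hgc : ∀ k, ∃ e : ℕ, g ^ c k = (g ^ m) ^ e * g := fun k => by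
    obtain ⟨e, he⟩ := (Nat.modEq_iff_dvd' (Nat.one_le_pow _ _ hp.pos)).mp
      (Nat.pow_mul_totient_modEq_one hpm k).symm
    refine ⟨e, ?_⟩
    rw [← pow_mul, ← he, ← pow_succ, Nat.sub_add_cancel (Nat.one_le_pow _ _ hp.pos)]
  obtain ⟨s, -, hs⟩ := hK.exists_mapClusterPt_of_frequently (l := atTop) (f := fun k => g ^ c k)
    (Frequently.of_forall fun k => K.pow_mem hgK _)
  refine ⟨s, ?_, ⟨m, hm, hpm.symm, ?_⟩, ?_⟩
  · have hgc_comm : ∀ k, g ^ c k ∈ Set.centralizer {g} := by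
      intro k h hh
      rw [Set.mem_singleton_iff.mp hh]
      exact ((Commute.refl g).pow_right _).eq
    exact Set.mem_centralizer_iff.mp
      ((Set.isClosed_centralizer {g}).mem_of_mapClusterPt hs (Eventually.of_forall hgc_comm)) g rfl
  · have hlim : Tendsto (fun k => (g ^ c k) ^ m) atTop (𝓝 1) := by
      simpa only [← pow_mul, mul_comm _ m] using hgm.tendsto_pow_pow_mul (Nat.totient_pos.mpr hm)
    exact eq_of_nhds_neBot ((hs.continuousAt_comp (continuous_pow m).continuousAt).clusterPt.mono hlim)
  · refine hG.topologicallyUnipotent_of_mem_closure_zpowers hgm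
      (isClosed_closure.mem_of_mapClusterPt
        (hs.continuousAt_comp (f := fun y => g * y⁻¹) (by fun_prop))
        (Eventually.of_forall fun k => subset_closure ?_))
    obtain ⟨e, he⟩ := hgc k
    simp only [Function.comp_apply, he, mul_inv_rev, mul_inv_cancel_left]
    exact inv_mem (pow_mem (Subgroup.mem_zpowers _) e)

end

/-- Topological Jordan decomposition: every strongly compact element `g` of a topological
group whose identity has a neighbourhood basis of pro-`p` subgroups admits a unique
decomposition `g = gᵤ * gₛ = gₛ * gᵤ` with `gᵤ` topologically unipotent and `gₛ`
residually semisimple. -/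
theorem topological_jordan_decomposition {G : Type*} [Group G] [TopologicalSpace G]
    [IsTopologicalGroup G] [T2Space G] (p : ℕ) (hp : p.Prime) (hG : HasProPBasis p G)
    (g : G) (hg : StronglyCompact g) :
    ∃! d : G × G, g = d.1 * d.2 ∧ g = d.2 * d.1 ∧
      TopologicallyUnipotent p d.1 ∧ ResiduallySemisimple p d.2 := by
  obtain ⟨s, hgs, hs, hu⟩ := hG.exists_semisimple_part hp hg
  have hdecomp : g = g * s⁻¹ * s := (inv_mul_cancel_right g s).symm
  have hcomm : Commute (g * s⁻¹) s := hgs.mul_left (Commute.refl s).inv_left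
  refine ⟨(g * s⁻¹, s), ⟨hdecomp, hdecomp.trans hcomm.eq, hu, hs⟩, ?_⟩
  rintro ⟨u', s'⟩ ⟨h1, h2, hu', hs'⟩
  have hs's : s' = s :=
    hs'.eq_of_mul_eq_mul hs (h1.symm.trans h2) hcomm hu' hu (h1.symm.trans hdecomp)
  subst hs's
  exact Prod.ext (eq_mul_inv_of_mul_eq h1.symm) rfl
end

section
/- The topological Jordan decomposition is functorial: if φ : G → G' is a continuous homomorphism of topological groups (each having a neighborhood basis of 1 by pro-p groups) and g ∈ G is strongly compact, then φ(g) is strongly compact and φ(g)_s = φ(g_s), φ(g)_u = φ(g_u). -/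
open Filter Topology

/-! Continuous homomorphisms carry compact subgroups to compact subgroups, elements of finite
order prime to `p` to such elements, and sequences tending to `1` to sequences tending to `1`;
so `φ gu * φ gs` is a topological Jordan decomposition of `φ g`. It is the only one: if
`s ^ N = 1` with `N` prime to `p`, then by Euler
`(u * s) ^ p ^ (totient N * n) = u ^ p ^ (totient N * n) * s` tends to `s`,
so `s`, and then `u`, is determined by the product `u * s`. -/

section Jordan

variable {G : Type*} [Group G]

theorem ResiduallySemisimple.map {H F : Type*} [Group H] [FunLike F G H] [MonoidHomClass F G H]
    {p : ℕ} {s : G} (hs : ResiduallySemisimple p s) (φ : F) :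
    ResiduallySemisimple p (φ s) := by
  obtain ⟨N, hN, hcop, hsN⟩ := hs
  exact ⟨N, hN, hcop, by rw [← map_pow, hsN, map_one]⟩

theorem TopologicallyUnipotent.map [TopologicalSpace G] {H F : Type*} [Group H]
    [TopologicalSpace H] [FunLike F G H] [MonoidHomClass F G H] {p : ℕ} {u : G}
    (hu : TopologicallyUnipotent p u) {φ : F} (hφ : Continuous φ) :
    TopologicallyUnipotent p (φ u) := by
  have h := (map_one φ ▸ hφ.tendsto 1).comp hu
  simpa only [TopologicallyUnipotent, Function.comp_def, map_pow] using h

theorem StronglyCompact.map [TopologicalSpace G] {H : Type*} [Group H] [TopologicalSpace H]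
    {g : G} (hg : StronglyCompact g) {φ : G →* H} (hφ : Continuous φ) :
    StronglyCompact (φ g) := by
  obtain ⟨K, hK, hgK⟩ := hg
  exact ⟨K.map φ, by simpa only [Subgroup.coe_map] using hK.image hφ,
    Subgroup.mem_map_of_mem φ hgK⟩

theorem pow_pow_totient_mul_eq_self {p N : ℕ} {s : G} (hsN : s ^ N = 1) (hcop : N.Coprime p)
    (n : ℕ) : s ^ p ^ (N.totient * n) = s := by
  have hmod : p ^ (N.totient * n) ≡ 1 [MOD N] := by
    simpa only [pow_mul, one_pow] using (Nat.ModEq.pow_totient hcop.symm).pow n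
  rw [pow_eq_pow_mod _ hsN, hmod, ← pow_eq_pow_mod 1 hsN, pow_one]

theorem tendsto_mul_pow_pow_totient_mul [TopologicalSpace G] [ContinuousMul G] {p N : ℕ}
    {u s : G} (hus : Commute u s) (hu : TopologicallyUnipotent p u) (hN : 0 < N)
    (hsN : s ^ N = 1) (hcop : N.Coprime p) :
    Tendsto (fun n : ℕ => (u * s) ^ p ^ (N.totient * n)) atTop (𝓝 s) := by
  have hmono : StrictMono fun n : ℕ => N.totient * n :=
    strictMono_mul_left_of_pos (Nat.totient_pos.mpr hN)
  have hu' : Tendsto (fun n : ℕ => u ^ p ^ (N.totient * n)) atTop (𝓝 1) :=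
    hu.comp hmono.tendsto_atTop
  simpa only [hus.mul_pow, pow_pow_totient_mul_eq_self hsN hcop, one_mul] using
    hu'.mul_const s

theorem topologicalJordanDecomposition_unique [TopologicalSpace G] [ContinuousMul G]
    [T2Space G] {p : ℕ} {u₁ s₁ u₂ s₂ : G} (h : u₁ * s₁ = u₂ * s₂)
    (h₁ : Commute u₁ s₁) (h₂ : Commute u₂ s₂)
    (hu₁ : TopologicallyUnipotent p u₁) (hs₁ : ResiduallySemisimple p s₁)
    (hu₂ : TopologicallyUnipotent p u₂) (hs₂ : ResiduallySemisimple p s₂) :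
    u₁ = u₂ ∧ s₁ = s₂ := by
  obtain ⟨N₁, hN₁, hcop₁, hsN₁⟩ := hs₁
  obtain ⟨N₂, hN₂, hcop₂, hsN₂⟩ := hs₂
  have hN : 0 < N₁ * N₂ := Nat.mul_pos hN₁ hN₂
  have hcop : (N₁ * N₂).Coprime p := Nat.Coprime.mul_left hcop₁ hcop₂
  have hs₁N : s₁ ^ (N₁ * N₂) = 1 := by rw [pow_mul, hsN₁, one_pow]
  have hs₂N : s₂ ^ (N₁ * N₂) = 1 := by rw [mul_comm, pow_mul, hsN₂, one_pow]
  have hs : s₁ = s₂ := tendsto_nhds_unique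
    (tendsto_mul_pow_pow_totient_mul h₁ hu₁ hN hs₁N hcop)
    (h ▸ tendsto_mul_pow_pow_totient_mul h₂ hu₂ hN hs₂N hcop)
  exact ⟨mul_right_cancel (hs ▸ h), hs⟩

end Jordan

theorem topological_jordan_decomposition_functorial_general {G G' : Type*}
    [Group G] [TopologicalSpace G]
    [Group G'] [TopologicalSpace G'] [IsTopologicalGroup G'] [T2Space G']
    (p : ℕ)
    (φ : G →* G') (hφ : Continuous φ)
    (g gu gs : G) (hg : StronglyCompact g)
    (hdec : g = gu * gs) (hdec' : g = gs * gu)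
    (hgu : TopologicallyUnipotent p gu) (hgs : ResiduallySemisimple p gs) :
    StronglyCompact (φ g) ∧
    φ g = φ gu * φ gs ∧ φ g = φ gs * φ gu ∧
    TopologicallyUnipotent p (φ gu) ∧ ResiduallySemisimple p (φ gs) ∧
    (∀ hu hs : G', φ g = hu * hs → φ g = hs * hu →
      TopologicallyUnipotent p hu → ResiduallySemisimple p hs →
      hu = φ gu ∧ hs = φ gs) := by
  have hφdec : φ g = φ gu * φ gs := by rw [hdec, map_mul]
  have hφdec' : φ g = φ gs * φ gu := by rw [hdec', map_mul]
  have hφgu : TopologicallyUnipotent p (φ gu) := hgu.map hφ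
  have hφgs : ResiduallySemisimple p (φ gs) := hgs.map φ
  refine ⟨hg.map hφ, hφdec, hφdec', hφgu, hφgs, fun hu hs h h' hhu hhs => ?_⟩
  exact topologicalJordanDecomposition_unique (h.symm.trans hφdec) (h.symm.trans h')
    (hφdec.symm.trans hφdec') hhu hhs hφgu hφgs

/-- Functoriality of the topological Jordan decomposition: a continuous homomorphism `φ`
maps the topological Jordan decomposition `g = gᵤ * gₛ` of a strongly compact element to
the topological Jordan decomposition of `φ g`; i.e. `φ g` is strongly compact, with
`(φ g)ₛ = φ gₛ` and `(φ g)ᵤ = φ gᵤ` (expressed via the uniqueness of the decomposition). -/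
theorem topological_jordan_decomposition_functorial {G G' : Type*}
    [Group G] [TopologicalSpace G] [IsTopologicalGroup G] [T2Space G]
    [Group G'] [TopologicalSpace G'] [IsTopologicalGroup G'] [T2Space G']
    (p : ℕ) (hp : p.Prime) (hG : HasProPBasis p G) (hG' : HasProPBasis p G')
    (φ : G →* G') (hφ : Continuous φ)
    (g gu gs : G) (hg : StronglyCompact g)
    (hdec : g = gu * gs) (hdec' : g = gs * gu)
    (hgu : TopologicallyUnipotent p gu) (hgs : ResiduallySemisimple p gs) :
    StronglyCompact (φ g) ∧
    φ g = φ gu * φ gs ∧ φ g = φ gs * φ gu ∧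
    TopologicallyUnipotent p (φ gu) ∧ ResiduallySemisimple p (φ gs) ∧
    (∀ hu hs : G', φ g = hu * hs → φ g = hs * hu →
      TopologicallyUnipotent p hu → ResiduallySemisimple p hs →
      hu = φ gu ∧ hs = φ gs) :=
  topological_jordan_decomposition_functorial_general p φ hφ g gu gs hg hdec hdec' hgu hgs
end

section
/- Let R be the ring of integers of a p-adic field with p ≠ 2, M a free R-module of finite rank r, and q : M × M → R a unimodular symmetric bilinear form. Then there exists a basis (e_1,…,e_r) of M with q(e_i,e_j) = δ_{ij} for (i,j) ≠ (r,r), and q(e_r,e_r) any prescribed unit in the square class of the discriminant of q. -/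
/-!
Since `2` is a unit, a unimodular symmetric matrix over the local ring `R` primitively represents
a unit (otherwise all of its entries lie in the maximal ideal), and such a unit pivot splits off
an orthogonal summand of rank one (Schur complement); hence the form diagonalizes. Two diagonal
units `a`, `c` can be traded for `1` and `a * c`: by counting over the finite residue field of
odd characteristic and Hensel's lemma, `a x² + c y² = 1` is solvable, so `⟨a⟩ ⊥ ⟨c⟩`
primitively represents `1`, which splits off in turn. The last diagonal entry then equals the
discriminant up to the square of a unit, and rescaling the last basis vector turns it into `u`.
-/

open IsLocalRing Polynomial

section Binary

variable {R : Type*} [CommRing R] [IsLocalRing R] [HenselianRing R (maximalIdeal R)]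

theorem isSquare_of_isSquare_residue (h2 : (2 : ResidueField R) ≠ 0) {t : R}
    (ht : IsSquare (residue R t)) (ht0 : residue R t ≠ 0) : IsSquare t := by
  obtain ⟨s, hs⟩ := ht
  obtain ⟨x₀, rfl⟩ := residue_surjective s
  have hx₀ : residue R x₀ ≠ 0 := by rintro h; rw [h, zero_mul] at hs; exact ht0 hs
  have hroot : (X ^ 2 - C t).eval x₀ ∈ maximalIdeal R := by
    rw [← residue_eq_zero_iff]
    simp [hs, sq]
  have hderiv : IsUnit (residue R ((X ^ 2 - C t).derivative.eval x₀)) := by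
    have : (X ^ 2 - C t).derivative.eval x₀ = 2 * x₀ := by simp; ring
    rw [this, isUnit_iff_ne_zero, map_mul, map_ofNat]
    exact mul_ne_zero h2 hx₀
  obtain ⟨x, hx, -⟩ :=
    HenselianRing.is_henselian _ (monic_X_pow_sub_C t two_ne_zero) x₀ hroot hderiv
  exact ⟨x, by simpa [sub_eq_zero, sq, eq_comm] using hx⟩

theorem exists_mul_sq_add_mul_sq_eq_one_of_residue (h2 : (2 : ResidueField R) ≠ 0) {a b : R}
    (ha : IsUnit a) (y : R) {x : ResidueField R} (hx : x ≠ 0)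
    (h : residue R a * x ^ 2 + residue R b * residue R y ^ 2 = 1) :
    ∃ x, a * x ^ 2 + b * y ^ 2 = 1 := by
  obtain ⟨a', ha'⟩ := ha.exists_right_inv
  have ht : residue R (a' * (1 - b * y ^ 2)) = x ^ 2 := by
    have ha'r : residue R a * residue R a' = 1 := by rw [← map_mul, ha', map_one]
    simp only [map_mul, map_sub, map_one, map_pow]
    linear_combination x ^ 2 * ha'r - residue R a' * h
  obtain ⟨s, hs⟩ := isSquare_of_isSquare_residue h2 ⟨x, by rw [ht, sq]⟩
    (by rw [ht]; exact pow_ne_zero 2 hx)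
  exact ⟨s, by linear_combination a * hs.symm + (1 - b * y ^ 2) * ha'⟩

theorem exists_mul_sq_add_mul_sq_eq_one [Finite (ResidueField R)]
    (hκ : ringChar (ResidueField R) ≠ 2) {a b : R} (ha : IsUnit a) (hb : IsUnit b) :
    ∃ x y, a * x ^ 2 + b * y ^ 2 = 1 := by
  have := Fintype.ofFinite (ResidueField R)
  have h2 : (2 : ResidueField R) ≠ 0 := Ring.two_ne_zero hκ
  have hdeg {c : R} (hc : IsUnit c) : (C (residue R c) * X ^ 2).degree = 2 :=
    degree_C_mul_X_pow 2 ((residue_ne_zero_iff_isUnit c).2 hc)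
  obtain ⟨x, y, hxy⟩ := FiniteField.exists_root_sum_quadratic (hdeg ha)
    (g := C (residue R b) * X ^ 2 - 1)
    (by rw [degree_sub_eq_left_of_degree_lt] <;> simp [hdeg hb])
    (FiniteField.odd_card_of_char_ne_two hκ)
  have hxy : residue R a * x ^ 2 + residue R b * y ^ 2 = 1 := by
    simp only [eval_sub, eval_mul, eval_C, eval_pow, eval_X, eval_one] at hxy
    linear_combination hxy
  obtain ⟨y₀, rfl⟩ := residue_surjective y
  by_cases hx : x = 0
  · have hy : residue R y₀ ≠ 0 := by rintro h; simp [hx, h] at hxy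
    obtain ⟨y, hy⟩ := exists_mul_sq_add_mul_sq_eq_one_of_residue h2 hb 0 hy
      (by simpa [hx, add_comm] using hxy)
    exact ⟨0, y, by linear_combination hy⟩
  · obtain ⟨x, hx⟩ := exists_mul_sq_add_mul_sq_eq_one_of_residue h2 ha y₀ hx hxy
    exact ⟨x, y₀, hx⟩

end Binary

namespace Matrix

variable {R : Type*} [CommRing R] {ι : Type*} [Fintype ι]

theorem transpose_mul_mul_apply (P A : Matrix ι ι R) (i j : ι) :
    (Pᵀ * A * P) i j = (fun k => P k i) ⬝ᵥ (A *ᵥ fun k => P k j) := by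
  simp only [mul_apply, transpose_apply, dotProduct, mulVec, Finset.mul_sum, Finset.sum_mul]
  rw [Finset.sum_comm]
  simp only [mul_assoc]

variable [DecidableEq ι]

theorem det_updateCol_one (v : ι → R) (i : ι) : (updateCol 1 i v).det = v i := by
  have hv : (fun k => ∑ l, v l • (1 : Matrix ι ι R) k l) = v := by
    ext k
    simp [one_apply]
  have := det_updateCol_sum (1 : Matrix ι ι R) i v
  rwa [hv, det_one, smul_eq_mul, mul_one] at this

def IsCongruent (A B : Matrix ι ι R) : Prop :=
  ∃ P : Matrix ι ι R, IsUnit P.det ∧ Pᵀ * A * P = B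

namespace IsCongruent

variable {A B C : Matrix ι ι R}

theorem refl (A : Matrix ι ι R) : IsCongruent A A := ⟨1, by simp, by simp⟩

theorem of_eq (h : A = B) : IsCongruent A B := h ▸ refl A

theorem trans (hAB : IsCongruent A B) (hBC : IsCongruent B C) : IsCongruent A C := by
  obtain ⟨P, hP, rfl⟩ := hAB
  obtain ⟨Q, hQ, rfl⟩ := hBC
  exact ⟨P * Q, by simpa using hP.mul hQ, by simp [Matrix.mul_assoc]⟩

theorem exists_det_eq (h : IsCongruent A B) : ∃ s : Rˣ, B.det = A.det * s ^ 2 := by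
  obtain ⟨P, hP, rfl⟩ := h
  exact ⟨hP.unit, by simp [det_mul]; ring⟩

theorem isUnit_det (h : IsCongruent A B) (hA : IsUnit A.det) : IsUnit B.det := by
  obtain ⟨s, hs⟩ := h.exists_det_eq
  rw [hs]
  exact hA.mul (s.isUnit.pow 2)

theorem transpose_eq (h : IsCongruent A B) (hA : Aᵀ = A) : Bᵀ = B := by
  obtain ⟨P, -, rfl⟩ := h
  simp [transpose_mul, hA, Matrix.mul_assoc]

theorem reindex {κ : Type*} [Fintype κ] [DecidableEq κ] (e : ι ≃ κ) (h : IsCongruent A B) :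
    IsCongruent (reindex e e A) (reindex e e B) := by
  obtain ⟨P, hP, rfl⟩ := h
  refine ⟨reindex e e P, by rwa [det_reindex_self], ?_⟩
  simp [submatrix_mul_equiv]

theorem fromBlocks_zero {κ : Type*} [Fintype κ] [DecidableEq κ] (h : IsCongruent A B)
    (D : Matrix κ κ R) : IsCongruent (fromBlocks A 0 0 D) (fromBlocks B 0 0 D) := by
  obtain ⟨P, hP, rfl⟩ := h
  refine ⟨fromBlocks P 0 0 1, by simpa [det_fromBlocks_zero₂₁] using hP, ?_⟩
  simp [fromBlocks_transpose, fromBlocks_multiply]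

theorem exists_basis_toMatrix₂_eq {M : Type*} [AddCommGroup M] [Module R M]
    {b : Module.Basis ι R M} {q : M →ₗ[R] M →ₗ[R] R}
    (h : IsCongruent (LinearMap.toMatrix₂ b b q) B) :
    ∃ e : Module.Basis ι R M, LinearMap.toMatrix₂ e e q = B := by
  obtain ⟨P, hP, rfl⟩ := h
  set e := b.map (toLinearEquiv b P hP)
  have hbe : b.toMatrix e = P := by
    ext i j
    simp [e, Module.Basis.toMatrix_apply, toLinearEquiv_apply, toLin_self, Finsupp.single_apply]
  refine ⟨e, ?_⟩
  rw [← LinearMap.toMatrix₂_mul_basis_toMatrix (b₁ := b) (b₂ := b) e e q, hbe]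

end IsCongruent

theorem isCongruent_submatrix (A : Matrix ι ι R) (σ : Equiv.Perm ι) :
    IsCongruent A (A.submatrix σ σ) := by
  refine ⟨(1 : Matrix ι ι R).submatrix id σ, ?_, ?_⟩
  · rw [det_permute', det_one, mul_one]
    exact (Equiv.Perm.sign σ).isUnit.map (Int.castRingHom R)
  · ext i j
    simp [mul_apply, one_apply]

theorem isCongruent_diagonal_update_one (c : R) (w : Rˣ) (i j : ι) :
    IsCongruent (diagonal (Function.update 1 i c))
      (diagonal (Function.update 1 j (c * w ^ 2))) := by
  refine (isCongruent_submatrix _ (Equiv.swap i j)).trans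
    ⟨diagonal fun k => (Function.update (1 : ι → Rˣ) j w k : R), by simp [det_diagonal], ?_⟩
  simp only [submatrix_diagonal_equiv, diagonal_transpose, diagonal_mul_diagonal]
  congr 1
  funext k
  rcases eq_or_ne k j with rfl | hkj
  · simp; ring
  · rcases eq_or_ne k i with rfl | hki
    · simp [hkj, hkj.symm, Equiv.swap_apply_left]
    · simp [hkj, hki, Equiv.swap_apply_of_ne_of_ne]

theorem IsCongruent.diagonal_update_of_det_eq {G : Matrix ι ι R} {c : R} {i : ι}
    (h : IsCongruent G (diagonal (Function.update 1 i c))) {u v : Rˣ}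
    (hu : (u : R) = G.det * v ^ 2) (j : ι) :
    IsCongruent G (diagonal (Function.update 1 j (u : R))) := by
  obtain ⟨s, hs⟩ := h.exists_det_eq
  have hc : c = G.det * s ^ 2 := by
    simpa [det_diagonal, Finset.prod_update_of_mem] using hs
  have hcu : c * ((v * s⁻¹ : Rˣ) : R) ^ 2 = u := by
    rw [hc, hu, Units.val_mul]
    linear_combination (G.det * v ^ 2 * (s * s⁻¹.val + 1)) * s.mul_inv
  rw [← hcu]
  exact h.trans (isCongruent_diagonal_update_one c (v * s⁻¹) i j)

theorem isCongruent_fromBlocks_schur {m n : Type*} [Fintype m] [DecidableEq m] [Fintype n]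
    [DecidableEq n] (A : Matrix m m R) (B : Matrix m n R) {D : Matrix n n R} (hD : IsUnit D.det)
    (hDt : Dᵀ = D) :
    IsCongruent (fromBlocks A B Bᵀ D) (fromBlocks (A - B * D⁻¹ * Bᵀ) 0 0 D) := by
  refine ⟨fromBlocks 1 0 (-(D⁻¹ * Bᵀ)) 1, by simp, ?_⟩
  simp [fromBlocks_transpose, fromBlocks_multiply, transpose_nonsing_inv, hDt,
    nonsing_inv_mul _ hD, mul_nonsing_inv_cancel_left _ _ hD, Matrix.mul_assoc, sub_eq_add_neg]

/-- Representation of `t` by a vector with a unit coordinate, i.e. one that extends to a basis. -/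
def RepresentsPrimitively (A : Matrix ι ι R) (t : R) : Prop :=
  ∃ v : ι → R, (∃ i, IsUnit (v i)) ∧ v ⬝ᵥ (A *ᵥ v) = t

theorem RepresentsPrimitively.exists_isCongruent {A : Matrix ι ι R} {t : R}
    (h : A.RepresentsPrimitively t) (k : ι) : ∃ B, IsCongruent A B ∧ B k k = t := by
  obtain ⟨v, ⟨i, hi⟩, rfl⟩ := h
  have hB : ((updateCol 1 i v)ᵀ * A * updateCol 1 i v) i i = v ⬝ᵥ (A *ᵥ v) := by
    rw [transpose_mul_mul_apply]
    simp
  refine ⟨_, IsCongruent.trans ⟨_, by rwa [det_updateCol_one], rfl⟩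
    (isCongruent_submatrix _ (Equiv.swap k i)), ?_⟩
  simpa using hB

theorem exists_isUnit_representsPrimitively [IsLocalRing R] [Nonempty ι] (h2 : IsUnit (2 : R))
    {A : Matrix ι ι R} (hA : Aᵀ = A) (hdet : IsUnit A.det) :
    ∃ a, IsUnit a ∧ A.RepresentsPrimitively a := by
  by_contra! h
  have hval (v : ι → R) (hv : ∃ i, IsUnit (v i)) : v ⬝ᵥ (A *ᵥ v) ∈ maximalIdeal R :=
    fun hu => h _ hu ⟨v, hv, rfl⟩
  have hdiag (i : ι) : A i i ∈ maximalIdeal R := by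
    simpa using hval (Pi.single i 1) ⟨i, by simp⟩
  have hentry (i j : ι) : A i j ∈ maximalIdeal R := by
    rcases eq_or_ne i j with rfl | hij
    · exact hdiag i
    have hsum := hval (Pi.single i 1 + Pi.single j 1) ⟨i, by simp [hij.symm]⟩
    have hji : A j i = A i j := by rw [← transpose_apply A i j, hA]
    have h2A : 2 * A i j ∈ maximalIdeal R := by
      convert sub_mem (sub_mem hsum (hdiag i)) (hdiag j) using 1
      simp [dotProduct_add, mulVec_add, hji]
      ring
    exact ((maximalIdeal.isMaximal R).isPrime.mem_or_mem h2A).resolve_left fun h => h h2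
  have hres : (residue R).mapMatrix A = 0 := by
    ext i j
    simpa using hentry i j
  have := (residue_ne_zero_iff_isUnit _).2 hdet
  rw [RingHom.map_det, hres, det_zero] at this
  exact this rfl

theorem representsPrimitively_diagonal [IsLocalRing R] (d : ι → R) {i j : ι} (hij : i ≠ j)
    {x y : R} (h : d i * x ^ 2 + d j * y ^ 2 = 1) : (diagonal d).RepresentsPrimitively 1 := by
  refine ⟨Pi.single i x + Pi.single j y, ?_, ?_⟩
  · rcases isUnit_or_isUnit_of_add_one h with hx | hy
    · exact ⟨i, by simpa [hij.symm] using isUnit_of_mul_isUnit_right hx⟩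
    · exact ⟨j, by simpa [hij] using isUnit_of_mul_isUnit_right hy⟩
  · simp [dotProduct_add, mulVec_add, hij, hij.symm]
    linear_combination h

section Fin

variable {n : ℕ}

/-- The orthogonal sum `S ⊥ ⟨a⟩`, with `a` in the last position. -/
def blockSnoc (S : Matrix (Fin n) (Fin n) R) (a : R) : Matrix (Fin (n + 1)) (Fin (n + 1)) R :=
  reindex finSumFinEquiv finSumFinEquiv (fromBlocks S 0 0 (diagonal fun _ => a))

theorem blockSnoc_diagonal (d : Fin n → R) (a : R) :
    blockSnoc (diagonal d) a = diagonal (Fin.snoc d a) := by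
  rw [blockSnoc, fromBlocks_diagonal, reindex_apply, submatrix_diagonal_equiv]
  congr 1
  ext i
  refine Fin.lastCases ?_ (fun i => ?_) i <;> simp

theorem IsCongruent.blockSnoc {S S' : Matrix (Fin n) (Fin n) R} (h : IsCongruent S S') (a : R) :
    IsCongruent (blockSnoc S a) (blockSnoc S' a) :=
  (h.fromBlocks_zero _).reindex _

theorem exists_isCongruent_blockSnoc_apply_last {A : Matrix (Fin (n + 1)) (Fin (n + 1)) R}
    (hA : Aᵀ = A) (hdet : IsUnit A.det) (ha : IsUnit (A (Fin.last n) (Fin.last n))) :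
    ∃ S, Sᵀ = S ∧ IsUnit S.det ∧
      IsCongruent A (blockSnoc S (A (Fin.last n) (Fin.last n))) := by
  set e : Fin n ⊕ Fin 1 ≃ Fin (n + 1) := finSumFinEquiv
  set A' := reindex e.symm e.symm A
  have hblocks : A' = fromBlocks A'.toBlocks₁₁ A'.toBlocks₁₂ A'.toBlocks₁₂ᵀ
      (diagonal fun _ => A (Fin.last n) (Fin.last n)) := by
    conv_lhs => rw [← fromBlocks_toBlocks A']
    congr
    · ext i j
      simpa [A', toBlocks₂₁, toBlocks₁₂] using congrFun (congrFun hA _) _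
    · ext i j
      fin_cases i; fin_cases j
      simp [A', toBlocks₂₂, e]
      rfl
  have hcongr := (isCongruent_fromBlocks_schur A'.toBlocks₁₁ A'.toBlocks₁₂
    (D := diagonal fun _ => A (Fin.last n) (Fin.last n)) (by simpa using ha)
    (diagonal_transpose _)).reindex e
  rw [← hblocks, show reindex e e A' = A by simp [A']] at hcongr
  have hsymm := hcongr.transpose_eq hA
  rw [transpose_reindex, (reindex e e).injective.eq_iff, fromBlocks_transpose,
    fromBlocks_inj] at hsymm
  refine ⟨_, hsymm.1, ?_, hcongr⟩
  have := hcongr.isUnit_det hdet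
  simp only [det_reindex_self, det_fromBlocks_zero₂₁] at this
  exact isUnit_of_mul_isUnit_left this

theorem RepresentsPrimitively.exists_isCongruent_blockSnoc
    {A : Matrix (Fin (n + 1)) (Fin (n + 1)) R} {a : R} (h : A.RepresentsPrimitively a)
    (ha : IsUnit a) (hA : Aᵀ = A) (hdet : IsUnit A.det) :
    ∃ S, Sᵀ = S ∧ IsUnit S.det ∧ IsCongruent A (blockSnoc S a) := by
  obtain ⟨B, hAB, rfl⟩ := h.exists_isCongruent (Fin.last n)
  obtain ⟨S, hS, hSdet, hBS⟩ :=
    exists_isCongruent_blockSnoc_apply_last (hAB.transpose_eq hA) (hAB.isUnit_det hdet) ha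
  exact ⟨S, hS, hSdet, hAB.trans hBS⟩

theorem exists_isCongruent_diagonal_update_zero [IsLocalRing R] (h2 : IsUnit (2 : R))
    (hrep : ∀ a b : R, IsUnit a → IsUnit b → ∃ x y, a * x ^ 2 + b * y ^ 2 = 1)
    (A : Matrix (Fin (n + 1)) (Fin (n + 1)) R) (hA : Aᵀ = A) (hdet : IsUnit A.det) :
    ∃ c, IsCongruent A (diagonal (Function.update 1 0 c)) := by
  induction n with
  | zero =>
    refine ⟨A 0 0, .of_eq ?_⟩
    ext i j
    fin_cases i; fin_cases j
    rfl
  | succ n ih =>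
    obtain ⟨a, ha, hAa⟩ := exists_isUnit_representsPrimitively h2 hA hdet
    obtain ⟨S, hS, hSdet, hAS⟩ := hAa.exists_isCongruent_blockSnoc ha hA hdet
    obtain ⟨c, hSc⟩ := ih S hS hSdet
    have hc : IsUnit c := by
      simpa [det_diagonal, Finset.prod_update_of_mem] using hSc.isUnit_det hSdet
    set D := diagonal (Fin.snoc (Function.update (1 : Fin (n + 1) → R) 0 c) a)
    have hAD : IsCongruent A D := by
      simpa only [D, blockSnoc_diagonal] using hAS.trans (hSc.blockSnoc a)
    -- `⟨c⟩ ⊥ ⟨a⟩` represents `1`, which is split off instead of `a`.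
    obtain ⟨x, y, hxy⟩ := hrep c a hc ha
    have hD1 : D.RepresentsPrimitively 1 :=
      representsPrimitively_diagonal _ (Fin.last_pos (n := n)).ne (by simpa using hxy)
    obtain ⟨S', hS', hS'det, hDS'⟩ :=
      hD1.exists_isCongruent_blockSnoc isUnit_one (hAD.transpose_eq hA) (hAD.isUnit_det hdet)
    obtain ⟨c', hS'c'⟩ := ih S' hS' hS'det
    refine ⟨c', hAD.trans (hDS'.trans ((hS'c'.blockSnoc 1).trans (.of_eq ?_)))⟩
    rw [blockSnoc_diagonal]
    congr 1
    funext i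
    refine Fin.lastCases ?_ (fun i => ?_) i <;> simp [Function.update_apply]

end Fin

end Matrix

open Matrix

theorem unimodular_symmetric_normal_form_general
    {R : Type*} [CommRing R] [IsDomain R] [IsDiscreteValuationRing R]
    [IsAdicComplete (IsLocalRing.maximalIdeal R) R]
    [Finite (IsLocalRing.ResidueField R)]
    (p : ℕ) (hp2 : p ≠ 2) [CharP (IsLocalRing.ResidueField R) p]
    {M : Type*} [AddCommGroup M] [Module R M] (n : ℕ)
    (b : Module.Basis (Fin (n + 1)) R M) (q : M →ₗ[R] M →ₗ[R] R)
    (hsymm : ∀ x y : M, q x y = q y x)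
    (hunimod : IsUnit (Matrix.det (Matrix.of fun i j => q (b i) (b j))))
    (u : Rˣ)
    (hu : ∃ v : Rˣ, (u : R) = Matrix.det (Matrix.of fun i j => q (b i) (b j)) * (v : R) ^ 2) :
    ∃ e : Module.Basis (Fin (n + 1)) R M,
      (∀ i j : Fin (n + 1), (i, j) ≠ (Fin.last n, Fin.last n) →
        q (e i) (e j) = if i = j then 1 else 0) ∧
      q (e (Fin.last n)) (e (Fin.last n)) = (u : R) := by
  have hκ : ringChar (ResidueField R) ≠ 2 := ringChar.eq (ResidueField R) p ▸ hp2
  have h2 : IsUnit (2 : R) :=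
    (residue_ne_zero_iff_isUnit 2).1 (by rw [map_ofNat]; exact Ring.two_ne_zero hκ)
  have hgram : (Matrix.of fun i j => q (b i) (b j)) = LinearMap.toMatrix₂ b b q := by
    ext i j
    rw [LinearMap.toMatrix₂_apply, of_apply]
  rw [hgram] at hunimod hu
  obtain ⟨c, hdiag⟩ := exists_isCongruent_diagonal_update_zero h2
    (fun _ _ => exists_mul_sq_add_mul_sq_eq_one hκ) _
    (by ext i j; exact hsymm _ _) hunimod
  obtain ⟨v, hv⟩ := hu
  obtain ⟨e, he⟩ :=
    (hdiag.diagonal_update_of_det_eq hv (Fin.last n)).exists_basis_toMatrix₂_eq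
  have hqe (i j : Fin (n + 1)) :
      q (e i) (e j) = diagonal (Function.update 1 (Fin.last n) (u : R)) i j := by
    rw [← he, LinearMap.toMatrix₂_apply]
  refine ⟨e, fun i j hij => ?_, by simp [hqe]⟩
  rw [hqe, diagonal_apply]
  split_ifs with h
  · subst h
    simp [show i ≠ Fin.last n by rintro rfl; exact hij rfl]
  · rfl

/-- Normal form for unimodular symmetric bilinear forms over the ring of integers of a
`p`-adic field, `p ≠ 2`: there is a basis `e₀, …, eₙ` with `q (eᵢ) (eⱼ) = δᵢⱼ` for
`(i,j) ≠ (n,n)`, and `q (eₙ) (eₙ)` equal to any prescribed unit in the square class of the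
discriminant of `q`. -/
theorem unimodular_symmetric_normal_form
    {R : Type*} [CommRing R] [IsDomain R] [IsDiscreteValuationRing R]
    [IsAdicComplete (IsLocalRing.maximalIdeal R) R]
    [Finite (IsLocalRing.ResidueField R)]
    (p : ℕ) (hp : p.Prime) (hp2 : p ≠ 2) [CharP (IsLocalRing.ResidueField R) p]
    {M : Type*} [AddCommGroup M] [Module R M] (n : ℕ)
    (b : Module.Basis (Fin (n + 1)) R M) (q : M →ₗ[R] M →ₗ[R] R)
    (hsymm : ∀ x y : M, q x y = q y x)
    (hunimod : IsUnit (Matrix.det (Matrix.of fun i j => q (b i) (b j))))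
    (u : Rˣ)
    (hu : ∃ v : Rˣ, (u : R) = Matrix.det (Matrix.of fun i j => q (b i) (b j)) * (v : R) ^ 2) :
    ∃ e : Module.Basis (Fin (n + 1)) R M,
      (∀ i j : Fin (n + 1), (i, j) ≠ (Fin.last n, Fin.last n) →
        q (e i) (e j) = if i = j then 1 else 0) ∧
      q (e (Fin.last n)) (e (Fin.last n)) = (u : R) :=
  unimodular_symmetric_normal_form_general p hp2 n b q hsymm hunimod u hu
end

section
/- With R and an R-Θ-semisimple h ∈ GL_n(R) as above (i.e. N(h) = h·ᵗh^{-1} is R-semisimple), let b_h(m₁,m₂) = ᵗm₁ h m₂ and b'_h(m₁,m₂) = ᵗm₁ ᵗh m₂, and let M' = ⊕_λ M'_λ be the eigenspace decomposition for ᵗh^{-1}·h over R'. Then b_h(M'_λ, M'_μ) = 0 = b'_h(M'_λ, M'_μ) unless λμ = 1. -/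
open Matrix

/-- `R` is either a field of characteristic `0`, or the ring of integers of a `p`-adic
field with odd residue characteristic. -/
def IsPaperRing (R : Type*) [CommRing R] [IsDomain R] [IsLocalRing R] : Prop :=
  (IsField R ∧ CharZero R) ∨
  (IsDiscreteValuationRing R ∧ IsAdicComplete (IsLocalRing.maximalIdeal R) R ∧
    Finite (IsLocalRing.ResidueField R) ∧ ringChar (IsLocalRing.ResidueField R) ≠ 2)

/-- A matrix `g` is `R`-semisimple: semisimple as an endomorphism if `R` is a field,
of finite order prime to the residue characteristic if `R` is a `p`-adic integer ring. -/
def IsRSemisimpleMatrix (R : Type*) [CommRing R] [IsLocalRing R] {n : ℕ}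
    (g : Matrix (Fin n) (Fin n) R) : Prop :=
  (IsField R ∧ Module.End.IsSemisimple (Matrix.toLin' g)) ∨
  (∃ k : ℕ, 0 < k ∧ Nat.Coprime k (ringChar (IsLocalRing.ResidueField R)) ∧ g ^ k = 1)

/-!
If `A x = λ ᵗA x` and `A y = μ ᵗA y`, then `ᵗx A y = μ ᵗx ᵗA y` and, transposing,
`ᵗx ᵗA y = λ ᵗx A y`. Hence `(1 - λμ) ᵗx A y = 0`, so both forms vanish when `λμ ≠ 1`.
-/

namespace Matrix

variable {m S : Type*} [Fintype m] [CommRing S] {A : Matrix m m S} {x y : m → S} {lam mu : S}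

theorem dotProduct_mulVec_eq_mul_of_mulVec_eq_smul (hy : A *ᵥ y = mu • (Aᵀ *ᵥ y)) :
    x ⬝ᵥ (A *ᵥ y) = mu * (x ⬝ᵥ (Aᵀ *ᵥ y)) := by
  rw [hy, dotProduct_smul, smul_eq_mul]

theorem dotProduct_transpose_mulVec_eq_mul_of_mulVec_eq_smul (hx : A *ᵥ x = lam • (Aᵀ *ᵥ x)) :
    x ⬝ᵥ (Aᵀ *ᵥ y) = lam * (x ⬝ᵥ (A *ᵥ y)) := by
  rw [dotProduct_transpose_mulVec, hx, dotProduct_smul, smul_eq_mul, dotProduct_transpose_mulVec]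

theorem dotProduct_mulVec_eq_zero_of_mulVec_eq_smul [NoZeroDivisors S]
    (hx : A *ᵥ x = lam • (Aᵀ *ᵥ x)) (hy : A *ᵥ y = mu • (Aᵀ *ᵥ y)) (hlm : lam * mu ≠ 1) :
    x ⬝ᵥ (A *ᵥ y) = 0 ∧ x ⬝ᵥ (Aᵀ *ᵥ y) = 0 := by
  have hA := dotProduct_mulVec_eq_mul_of_mulVec_eq_smul (x := x) hy
  have hAt := dotProduct_transpose_mulVec_eq_mul_of_mulVec_eq_smul (y := y) hx
  have hvanish : (1 - lam * mu) * (x ⬝ᵥ (A *ᵥ y)) = 0 := by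
    linear_combination hA + mu * hAt
  have hA0 : x ⬝ᵥ (A *ᵥ y) = 0 :=
    (mul_eq_zero.mp hvanish).resolve_left (sub_ne_zero.mpr (Ne.symm hlm))
  exact ⟨hA0, by rw [hAt, hA0, mul_zero]⟩

end Matrix

/-- The eigenvector condition `ᵗh⁻¹ h x = λ x` is written as `h x = λ ᵗh x`. -/
theorem eigenspaces_orthogonal_for_theta_semisimple_general
    {R : Type*} [CommRing R]
    {n : ℕ} (h : Matrix (Fin n) (Fin n) R)
    (R' : Type*) [CommRing R'] [IsDomain R'] [Algebra R R']
    (lam mu : R') (hlm : lam * mu ≠ 1) (x y : Fin n → R')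
    (hx : (h.map (algebraMap R R')) *ᵥ x = lam • ((h.map (algebraMap R R'))ᵀ *ᵥ x))
    (hy : (h.map (algebraMap R R')) *ᵥ y = mu • ((h.map (algebraMap R R'))ᵀ *ᵥ y)) :
    x ⬝ᵥ ((h.map (algebraMap R R')) *ᵥ y) = 0 ∧
    x ⬝ᵥ ((h.map (algebraMap R R'))ᵀ *ᵥ y) = 0 :=
  dotProduct_mulVec_eq_zero_of_mulVec_eq_smul hx hy hlm

/-- Orthogonality of the eigenspaces of `N_l(h) = ᵗh⁻¹ h` with respect to the bilinear
forms `b_h(x,y) = ᵗx h y` and `b'_h(x,y) = ᵗx ᵗh y`: for eigenvectors `x ∈ M'_λ` and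
`y ∈ M'_μ` over the extension `R'`, both forms vanish on `(x,y)` unless `λ μ = 1`.
The eigenvector condition `N_l(h) x = λ x` is expressed equivalently as
`h x = λ ᵗh x`. -/
theorem eigenspaces_orthogonal_for_theta_semisimple
    {R : Type*} [CommRing R] [IsDomain R] [IsLocalRing R] (hR : IsPaperRing R)
    {n : ℕ} (h : Matrix (Fin n) (Fin n) R) (hinv : IsUnit h)
    (hss : IsRSemisimpleMatrix R ((hᵀ)⁻¹ * h))
    (R' : Type*) [CommRing R'] [IsDomain R'] [Algebra R R']
    (hinj : Function.Injective (algebraMap R R'))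
    (lam mu : R') (hlm : lam * mu ≠ 1) (x y : Fin n → R')
    (hx : (h.map (algebraMap R R')) *ᵥ x = lam • ((h.map (algebraMap R R'))ᵀ *ᵥ x))
    (hy : (h.map (algebraMap R R')) *ᵥ y = mu • ((h.map (algebraMap R R'))ᵀ *ᵥ y)) :
    x ⬝ᵥ ((h.map (algebraMap R R')) *ᵥ y) = 0 ∧
    x ⬝ᵥ ((h.map (algebraMap R R'))ᵀ *ᵥ y) = 0 :=
  eigenspaces_orthogonal_for_theta_semisimple_general h R' lam mu hlm x y hx hy
end

section
/- Let h ∈ GL_n(R) be R-Θ-semisimple with decomposition h = p + q into skew-symmetric part p and symmetric part q. Then M = R^n decomposes as M = M_+ ⊕ M_- ⊕ M_0 where M_+ = ker p, M_- = ker q, and M_0 is the intersection of the q-orthogonal complement of M_+ with the p-orthogonal complement of M_-; moreover the restrictions q|M_+, p|M_-, q|M_0, p|M_0 are all unimodular. -/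
/-!
With `f = ᵗh⁻¹ h` we have `ᵗh f = h`, hence `2p = ᵗh (f - 1)` and `2q = ᵗh (f + 1)`. So
`M₊ = ker (f - 1)`, `M₋ = ker (f + 1)`, the forms of `p` and `q` are the form `B(x, y) = ᵗx ᵗh y`
composed with `(f ∓ 1) / 2`, and `f` is an isometry of `B`. Semisimplicity gives an annihilating
polynomial of `f` with `±1` as at most simple roots, so Bezout produces polynomials `e₊, e₋` in `f`
projecting onto `ker (f ∓ 1)` along `range (f ∓ 1)`. For an isometry this kernel and this range are
`B`-orthogonal, so `e₊`, `e₋` and `e₀ = 1 - e₊ - e₋` are `B`-self-adjoint orthogonal idempotents.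
Then `M₀ = range e₀`, the perfect pairing `B` stays unimodular on the range of a self-adjoint
idempotent, and `(f ± 1) / 2` acts invertibly (through a polynomial in `f`) on the ranges where the
forms of `q` and `p` are restricted.
-/

open Matrix

/-- The bilinear form on a submodule `W` induced by `B` is unimodular, i.e. the induced
map `W → W*` is bijective. -/
def IsUnimodularOn {R M : Type*} [CommRing R] [AddCommGroup M] [Module R M]
    (B : M →ₗ[R] M →ₗ[R] R) (W : Submodule R M) : Prop :=
  Function.Bijective ⇑(LinearMap.domRestrict₁₂ B W W)

open Polynomial
open LinearMap (ker range domRestrict₁₂ IsAdjointPair)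

section Projection

variable {R A : Type*} [CommRing R] [Ring A] [Algebra R A]

theorem exists_aeval_projection {x : A} {a : R} {g : R[X]}
    (hg : aeval x ((X - C a) * g) = 0) (hu : IsUnit (g.eval a)) :
    ∃ P S : R[X], aeval x (X - C a) * aeval x P = 0 ∧
      aeval x (X - C a) * aeval x S = 1 - aeval x P := by
  obtain ⟨b, hb⟩ := hu.exists_right_inv
  -- `X - a` and `g` are coprime: `g = (X - a) t + g(a)` with `g(a)` a unit.
  obtain ⟨t, ht⟩ := X_sub_C_dvd_sub_C_eval (a := a) (p := g)
  have hbezout : (X - C a) * (-(C b * t)) = 1 - C b * g := by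
    linear_combination (C b) * ht + (by rw [← C_mul, hb, C_1] : C (g.eval a) * C b = 1)
  refine ⟨C b * g, -(C b * t), ?_, ?_⟩
  · rw [← map_mul, mul_left_comm, map_mul, hg, mul_zero]
  · rw [← map_mul, hbezout, map_sub, map_one]

variable {y e s : A}

theorem isIdempotentElem_of_mul_eq_zero (he : y * e = 0) (hs : y * s = 1 - e)
    (hc : Commute e y) : IsIdempotentElem e := by
  have : e * (1 - e) = 0 := by rw [← hs, ← mul_assoc, hc.eq, he, zero_mul]
  rwa [mul_sub, mul_one, sub_eq_zero, eq_comm] at this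

theorem mul_eq_zero_of_sub_eq_one {y' e' : A} (hy : y' - y = 1) (he : y * e = 0)
    (he' : y' * e' = 0) (hcomm : Commute e y') : e * e' = 0 := by
  rw [← one_mul (e * e'), ← hy, sub_mul, ← mul_assoc, ← hcomm.eq, mul_assoc, he', ← mul_assoc, he,
    mul_zero, zero_mul, sub_zero]

theorem CompleteOrthogonalIdempotents.of_mul_eq_zero {e₁ e₂ : A} (h₁ : IsIdempotentElem e₁)
    (h₂ : IsIdempotentElem e₂) (h₁₂ : e₁ * e₂ = 0) (h₂₁ : e₂ * e₁ = 0) :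
    CompleteOrthogonalIdempotents ![e₁, e₂, 1 - e₁ - e₂] := by
  refine ⟨⟨fun i ↦ ?_, fun i j hij ↦ ?_⟩, ?_⟩
  · fin_cases i <;> simp [IsIdempotentElem, mul_sub, sub_mul, h₁.eq, h₂.eq, h₁₂, h₂₁]
  · fin_cases i <;> fin_cases j <;> simp_all [mul_sub, sub_mul, h₁.eq, h₂.eq]
  · simp [Fin.sum_univ_three]

end Projection

section Annihilator

variable {R A : Type*} [CommRing R] [Ring A] [Algebra R A]

theorem exists_annihilator_of_pow_eq_one {x : A} {m : ℕ} (hx : x ^ m = 1) (hm0 : m ≠ 0)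
    (hm : IsUnit (m : R)) {a : R} (ha : a ^ m = 1) :
    ∃ g : R[X], aeval x ((X - C a) * g) = 0 ∧ IsUnit (g.eval a) := by
  refine ⟨∑ i ∈ Finset.range m, X ^ i * C a ^ (m - 1 - i), ?_, ?_⟩
  · rw [mul_comm, (commute_X (C a)).geom_sum₂_mul, ← C_pow, ha, C_1]
    simp [hx]
  · simp only [eval_finsetSum, eval_mul, eval_pow, eval_X, eval_C, geom_sum₂_self]
    exact hm.mul ((IsUnit.of_pow_eq_one ha hm0).pow _)

theorem exists_annihilator_of_squarefree {K : Type*} [Field K] [Algebra K A] {x : A}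
    {μ : K[X]} (hμ : aeval x μ = 0) (hsq : Squarefree μ) (a : K) :
    ∃ g : K[X], aeval x ((X - C a) * g) = 0 ∧ IsUnit (g.eval a) := by
  by_cases hroot : μ.IsRoot a
  · refine ⟨μ /ₘ (X - C a), by rwa [mul_divByMonic_eq_iff_isRoot.mpr hroot], ?_⟩
    refine isUnit_iff_ne_zero.mpr fun hroot' ↦ not_isUnit_X_sub_C a (hsq _ ?_)
    exact Dvd.intro _ (by rw [mul_assoc, mul_divByMonic_eq_iff_isRoot.mpr hroot',
      mul_divByMonic_eq_iff_isRoot.mpr hroot])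
  · exact ⟨μ, by rw [map_mul, hμ, mul_zero], isUnit_iff_ne_zero.mpr hroot⟩

end Annihilator

section Endomorphisms

variable {R M : Type*} [CommRing R] [AddCommGroup M] [Module R M]

theorem DirectSum.isInternal_range_of_completeOrthogonalIdempotents {ι : Type*} [Fintype ι]
    [DecidableEq ι] {e : ι → Module.End R M} (he : CompleteOrthogonalIdempotents e) :
    DirectSum.IsInternal fun i ↦ range (e i) := by
  refine DirectSum.isInternal_submodule_of_iSupIndep_of_iSup_eq_top (fun i ↦ ?_) ?_
  · refine Submodule.disjoint_def.mpr fun x hx hx' ↦ ?_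
    have hker : (⨆ j, ⨆ (_ : j ≠ i), range (e j)) ≤ ker (e i) := by
      refine iSup₂_le fun j hji ↦ ?_
      rintro _ ⟨z, rfl⟩
      simp [← Module.End.mul_apply, he.ortho hji.symm]
    rw [← (LinearMap.IsIdempotentElem.mem_range_iff (he.idem i)).mp hx]
    exact hker hx'
  · refine eq_top_iff.mpr fun x _ ↦ ?_
    have : x = ∑ i, e i x := by simp [← LinearMap.sum_apply, he.complete]
    rw [this]
    exact Submodule.sum_mem _ fun i _ ↦ Submodule.mem_iSup_of_mem i (LinearMap.mem_range_self _ _)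

variable {y e s : Module.End R M}

theorem range_eq_ker_of_mul_eq (he : y * e = 0) (hs : y * s = 1 - e) (hc : Commute s y) :
    range e = ker y := by
  refine le_antisymm ?_ fun x hx ↦ ?_
  · rintro _ ⟨z, rfl⟩
    simp [← Module.End.mul_apply, he]
  · have : x - e x = s (y x) := by rw [← Module.End.mul_apply, hc.eq, hs]; rfl
    rw [LinearMap.mem_ker.mp hx, map_zero, sub_eq_zero] at this
    exact ⟨x, this.symm⟩

theorem bijOn_range_of_mul_mul_eq {r ρ e : Module.End R M} (hr : Commute r e)
    (hρ : Commute ρ e) (hrρ : Commute r ρ) (h : r * ρ * e = e) :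
    Set.BijOn r (range e) (range e) := by
  have hmaps : ∀ {u : Module.End R M}, Commute u e → Set.MapsTo u (range e) (range e) := by
    rintro u hu _ ⟨z, rfl⟩
    exact ⟨u z, by rw [← Module.End.mul_apply, ← hu.eq]; rfl⟩
  refine Set.InvOn.bijOn ⟨?_, ?_⟩ (hmaps hr) (hmaps hρ)
  · rintro _ ⟨z, rfl⟩
    rw [← Module.End.mul_apply, ← Module.End.mul_apply, ← hrρ.eq, h]
  · rintro _ ⟨z, rfl⟩
    rw [← Module.End.mul_apply, ← Module.End.mul_apply, h]

end Endomorphisms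

section BilinForm

variable {R M : Type*} [CommRing R] [AddCommGroup M] [Module R M] (B : LinearMap.BilinForm R M)
  {e : Module.End R M}

theorem isAdjointPair_of_apply_one_sub_eq_zero
    (h : ∀ x y, B (e x) ((1 - e) y) = 0 ∧ B ((1 - e) x) (e y) = 0) :
    IsAdjointPair B B e e := fun x y ↦ by
  have hsplit : ∀ z, e z + (1 - e) z = z := fun z ↦ by simp
  calc B (e x) y = B (e x) (e y) := by
        conv_lhs => rw [← hsplit y]
        rw [map_add, (h x y).1, add_zero]
    _ = B x (e y) := by
        conv_rhs => rw [← hsplit x]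
        rw [map_add, LinearMap.add_apply, (h x y).2, add_zero]

theorem apply_sub_smul_eq_zero_of_isometry {f : Module.End R M}
    (hf : ∀ x y, B (f x) (f y) = B x y) {a : R} (ha : a * a = 1) {x : M} (hx : f x = a • x)
    (y : M) : B x (f y - a • y) = 0 ∧ B (f y - a • y) x = 0 := by
  have hx' : x = a • f x := by rw [hx, smul_smul, ha, one_smul]
  constructor
  · rw [map_sub, map_smul, smul_eq_mul]
    nth_rw 1 [hx']
    rw [map_smul, LinearMap.smul_apply, hf, smul_eq_mul, sub_self]
  · rw [map_sub, map_smul, LinearMap.sub_apply, LinearMap.smul_apply, smul_eq_mul]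
    nth_rw 1 [hx']
    rw [map_smul, hf, smul_eq_mul, sub_self]

theorem isAdjointPair_of_isometry {f s : Module.End R M} (hf : ∀ x y, B (f x) (f y) = B x y)
    {a : R} (ha : a * a = 1) (he : aeval f (X - C a) * e = 0)
    (hs : aeval f (X - C a) * s = 1 - e) : IsAdjointPair B B e e := by
  have heigen : ∀ x, f (e x) = a • e x := fun x ↦ by
    simpa [sub_eq_zero] using congrArg (· x) he
  have hcomplement : ∀ y, (1 - e) y = f (s y) - a • s y := fun y ↦ by
    simpa using (congrArg (· y) hs).symm
  refine isAdjointPair_of_apply_one_sub_eq_zero B fun x y ↦ ⟨?_, ?_⟩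
  · rw [hcomplement]
    exact (apply_sub_smul_eq_zero_of_isometry B hf ha (heigen x) _).1
  · rw [hcomplement]
    exact (apply_sub_smul_eq_zero_of_isometry B hf ha (heigen y) _).2

theorem isUnimodularOn_range (hB : Function.Bijective B) (he : IsIdempotentElem e)
    (hadj : IsAdjointPair B B e e) : IsUnimodularOn B (range e) := by
  have hfix : ∀ w : range e, e w = w := fun w ↦
    (LinearMap.IsIdempotentElem.mem_range_iff he).mp w.2
  refine ⟨(injective_iff_map_eq_zero _).mpr fun w hw ↦ Subtype.ext (hB.injective ?_),
    fun φ ↦ ?_⟩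
  · ext z
    have := congrArg (· ⟨e z, LinearMap.mem_range_self e z⟩) hw
    simp only [LinearMap.domRestrict₁₂_apply, LinearMap.zero_apply] at this
    rw [← hfix w, hadj, this, ZeroMemClass.coe_zero, map_zero, LinearMap.zero_apply]
  · obtain ⟨x, hx⟩ := hB.surjective (φ ∘ₗ e.rangeRestrict)
    refine ⟨⟨e x, LinearMap.mem_range_self e x⟩, ?_⟩
    ext u
    rw [LinearMap.domRestrict₁₂_apply]
    change B (e x) u = φ u
    rw [hadj, hx, LinearMap.comp_apply]
    congr 1
    ext
    change e (e u) = u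
    rw [hfix, hfix]

theorem IsUnimodularOn.compl₂ {W : Submodule R M} (hW : IsUnimodularOn B W)
    {r : Module.End R M} (hr : Set.BijOn r W W) : IsUnimodularOn (B.compl₂ r) W := by
  let rW : W ≃ₗ[R] W := LinearEquiv.ofBijective (r.restrict hr.mapsTo) hr.bijective
  have : domRestrict₁₂ (B.compl₂ r) W W = rW.dualMap.toLinearMap ∘ₗ domRestrict₁₂ B W W := by
    ext; rfl
  rw [IsUnimodularOn, this]
  exact rW.dualMap.bijective.comp hW

theorem mem_orthogonalBilin_range_iff (hB : Function.Injective B.flip)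
    (hadj : IsAdjointPair B B e e) {r : Module.End R M} (hr : Commute r e) {x : M} :
    x ∈ (range e).orthogonalBilin (B.compl₂ r) ↔ r (e x) = 0 := by
  have hadj' : ∀ y z, B (e y) z = B y (e z) := hadj
  simp only [Submodule.mem_orthogonalBilin_iff, LinearMap.mem_range, forall_exists_index,
    forall_apply_eq_imp_iff, LinearMap.compl₂_apply, hadj']
  rw [← Module.End.mul_apply, ← hr.eq, Module.End.mul_apply, ← map_eq_zero_iff _ hB]
  simp [LinearMap.ext_iff]

end BilinForm


section PlusMinusZero

variable {R M : Type*} [CommRing R] [AddCommGroup M] [Module R M] (B : LinearMap.BilinForm R M)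

theorem orthogonalBilin_inf_orthogonalBilin_eq_range (hB : Function.Injective B.flip)
    {e₁ e₂ r₁ r₂ : Module.End R M} (he : CompleteOrthogonalIdempotents ![e₁, e₂, 1 - e₁ - e₂])
    (hadj₁ : IsAdjointPair B B e₁ e₁) (hadj₂ : IsAdjointPair B B e₂ e₂)
    (hker₁ : range e₁ = ker r₁) (hker₂ : range e₂ = ker r₂)
    (hc₁ : Commute r₂ e₁) (hc₂ : Commute r₁ e₂) :
    (ker r₁).orthogonalBilin (B.compl₂ r₂) ⊓ (ker r₂).orthogonalBilin (B.compl₂ r₁) =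
      range (1 - e₁ - e₂) := by
  have he₁ : IsIdempotentElem e₁ := he.idem 0
  have he₂ : IsIdempotentElem e₂ := he.idem 1
  have he₃ : IsIdempotentElem (1 - e₁ - e₂) := he.idem 2
  have h₂₁ : e₂ * e₁ = 0 := he.ortho (by decide : (1 : Fin 3) ≠ 0)
  have h₁₂ : e₁ * e₂ = 0 := he.ortho (by decide : (0 : Fin 3) ≠ 1)
  have h₁₃ : e₁ * (1 - e₁ - e₂) = 0 := he.ortho (by decide : (0 : Fin 3) ≠ 2)
  have h₂₃ : e₂ * (1 - e₁ - e₂) = 0 := he.ortho (by decide : (1 : Fin 3) ≠ 2)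
  ext x
  have h₁ : r₂ (e₁ x) = 0 ↔ e₁ x = 0 := by
    rw [← LinearMap.mem_ker, ← hker₂, LinearMap.IsIdempotentElem.mem_range_iff he₂,
      ← Module.End.mul_apply, h₂₁, LinearMap.zero_apply, eq_comm]
  have h₂ : r₁ (e₂ x) = 0 ↔ e₂ x = 0 := by
    rw [← LinearMap.mem_ker, ← hker₁, LinearMap.IsIdempotentElem.mem_range_iff he₁,
      ← Module.End.mul_apply, h₁₂, LinearMap.zero_apply, eq_comm]
  rw [Submodule.mem_inf, ← hker₁, ← hker₂, mem_orthogonalBilin_range_iff B hB hadj₁ hc₁,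
    mem_orthogonalBilin_range_iff B hB hadj₂ hc₂, h₁, h₂,
    LinearMap.IsIdempotentElem.mem_range_iff he₃]
  refine ⟨fun ⟨h₁, h₂⟩ ↦ by simp [h₁, h₂], fun h ↦ ?_⟩
  rw [← h, ← Module.End.mul_apply, ← Module.End.mul_apply, h₁₃, h₂₃]
  exact ⟨rfl, rfl⟩

theorem isUnimodularOn_compl₂_range (hB : Function.Bijective B) {e e' r ρ : Module.End R M}
    (he : IsIdempotentElem e) (hadj : IsAdjointPair B B e e) (hr : Commute r e)
    (hρ : Commute ρ e) (hrρ : Commute r ρ) (hinv : r * ρ = 1 - e') (he' : e' * e = 0) :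
    IsUnimodularOn (B.compl₂ r) (range e) :=
  (isUnimodularOn_range B hB he hadj).compl₂ B
    (bijOn_range_of_mul_mul_eq hr hρ hrρ (by rw [hinv, sub_mul, one_mul, he', sub_zero]))

theorem exists_adjoint_projection {f r : Module.End R M} (hf : ∀ x y, B (f x) (f y) = B x y)
    {a : R} (ha : a * a = 1) {g : R[X]} (hg : aeval f ((X - C a) * g) = 0)
    (hu : IsUnit (g.eval a)) {c : R} (hc : IsUnit c) (hr : r = c • aeval f (X - C a)) :
    ∃ P S : R[X], r * aeval f P = 0 ∧ r * aeval f S = 1 - aeval f P ∧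
      IsIdempotentElem (aeval f P) ∧ range (aeval f P) = ker r ∧
      IsAdjointPair B B (aeval f P) (aeval f P) := by
  obtain ⟨P, S, hP, hS⟩ := exists_aeval_projection hg hu
  obtain ⟨u, hu⟩ := hc.exists_left_inv
  have hrP : r * aeval f P = 0 := by rw [hr, smul_mul_assoc, hP, smul_zero]
  have hrS : r * aeval f (C u * S) = 1 - aeval f P := by
    rw [hr, map_mul, aeval_C, Algebra.algebraMap_eq_smul_one, smul_one_mul, smul_mul_smul_comm,
      mul_comm, hu, one_smul, hS]
  have hcomm : ∀ Q, Commute (aeval f Q) r := fun Q ↦ hr ▸ ((Commute.all _ _).map _).smul_right _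
  exact ⟨P, C u * S, hrP, hrS, isIdempotentElem_of_mul_eq_zero hrP hrS (hcomm _),
    range_eq_ker_of_mul_eq hrP hrS (hcomm _), isAdjointPair_of_isometry B hf ha hP hS⟩

theorem isInternal_and_isUnimodularOn_of_isometry [Invertible (2 : R)] [B.IsPerfPair]
    {f : Module.End R M} (hf : ∀ x y, B (f x) (f y) = B x y)
    (hplus : ∃ g : R[X], aeval f ((X - C 1) * g) = 0 ∧ IsUnit (g.eval 1))
    (hminus : ∃ g : R[X], aeval f ((X - C (-1)) * g) = 0 ∧ IsUnit (g.eval (-1)))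
    {p q : Module.End R M} (hp : p = (⅟2 : R) • (f - 1)) (hq : q = (⅟2 : R) • (f + 1))
    {M₀ : Submodule R M}
    (hM₀ : M₀ = (ker p).orthogonalBilin (B.compl₂ q) ⊓ (ker q).orthogonalBilin (B.compl₂ p)) :
    DirectSum.IsInternal ![ker p, ker q, M₀] ∧
      IsUnimodularOn (B.compl₂ q) (ker p) ∧ IsUnimodularOn (B.compl₂ p) (ker q) ∧
      IsUnimodularOn (B.compl₂ q) M₀ ∧ IsUnimodularOn (B.compl₂ p) M₀ := by
  have hp' : p = (⅟2 : R) • aeval f (X - C (1 : R)) := by simp [hp]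
  have hq' : q = (⅟2 : R) • aeval f (X - C (-1 : R)) := by simp [hq]
  have hcp : ∀ P, Commute p (aeval f P) := fun P ↦ hp' ▸ ((Commute.all _ P).map _).smul_left _
  have hcq : ∀ P, Commute q (aeval f P) := fun P ↦ hq' ▸ ((Commute.all _ P).map _).smul_left _
  obtain ⟨gp, hgp, hup⟩ := hplus
  obtain ⟨gm, hgm, hum⟩ := hminus
  obtain ⟨Pp, Sp, hPp, hSp, hidemp, hrangep, hadjp⟩ :=
    exists_adjoint_projection B hf (one_mul 1) hgp hup (isUnit_of_invertible _) hp'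
  obtain ⟨Pm, Sm, hPm, hSm, hidemm, hrangem, hadjm⟩ :=
    exists_adjoint_projection B hf (by norm_num) hgm hum (isUnit_of_invertible _) hq'
  set ep := aeval f Pp
  set em := aeval f Pm
  have hqp : q - p = 1 := by
    rw [hp, hq, ← smul_sub, add_sub_sub_cancel, ← two_smul R, smul_smul, invOf_mul_self,
      one_smul]
  have hpm : ep * em = 0 := mul_eq_zero_of_sub_eq_one hqp hPp hPm (hcq _).symm
  have hcoi := CompleteOrthogonalIdempotents.of_mul_eq_zero hidemp hidemm hpm
    (((Commute.all _ _).map _).eq.trans hpm)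
  have hM₀' : M₀ = range (1 - ep - em) := hM₀ ▸ orthogonalBilin_inf_orthogonalBilin_eq_range B
    (LinearMap.IsPerfPair.bijective_right B).injective hcoi hadjp hadjm hrangep hrangem
    (hcq _) (hcp _)
  have hc0 : ∀ u, (∀ P, Commute u (aeval f P)) → Commute u (1 - ep - em) := fun u hu ↦
    ((Commute.one_right u).sub_right (hu _)).sub_right (hu _)
  have hp0 : ep * (1 - ep - em) = 0 := hcoi.ortho (by decide : (0 : Fin 3) ≠ 2)
  have hm0 : em * (1 - ep - em) = 0 := hcoi.ortho (by decide : (1 : Fin 3) ≠ 2)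
  have hadj0 : IsAdjointPair B B ⇑(1 - ep - em) ⇑(1 - ep - em) :=
    (LinearMap.isAdjointPair_one.sub hadjp).sub hadjm
  have hB := LinearMap.IsPerfPair.bijective_left B
  rw [hM₀', ← hrangep, ← hrangem]
  refine ⟨?_, ?_, ?_, ?_, ?_⟩
  · convert DirectSum.isInternal_range_of_completeOrthogonalIdempotents hcoi using 2 with i
    fin_cases i <;> rfl
  · exact isUnimodularOn_compl₂_range B hB hidemp hadjp (hcq _) ((Commute.all _ _).map _)
      (hcq _) hSm (((Commute.all _ _).map _).eq.trans hpm)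
  · exact isUnimodularOn_compl₂_range B hB hidemm hadjm (hcp _) ((Commute.all _ _).map _)
      (hcp _) hSp hpm
  · exact isUnimodularOn_compl₂_range B hB (hcoi.idem 2) hadj0 (hc0 _ hcq)
      (hc0 _ fun _ ↦ (Commute.all _ _).map _) (hcq _) hSm hm0
  · exact isUnimodularOn_compl₂_range B hB (hcoi.idem 2) hadj0 (hc0 _ hcp)
      (hc0 _ fun _ ↦ (Commute.all _ _).map _) (hcp _) hSp hp0

end PlusMinusZero

namespace IsLocalRing

variable {R : Type*} [CommRing R] [IsLocalRing R]

theorem isUnit_natCast_iff {k : ℕ} : IsUnit (k : R) ↔ ¬ringChar (ResidueField R) ∣ k := by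
  rw [← residue_ne_zero_iff_isUnit, map_natCast, ne_eq, ringChar.spec]

theorem isUnit_natCast_of_coprime {k : ℕ} (hk : k.Coprime (ringChar (ResidueField R))) :
    IsUnit (k : R) :=
  isUnit_natCast_iff.mpr fun hdvd ↦ CharP.ringChar_ne_one (hk.symm.eq_one_of_dvd hdvd)

end IsLocalRing

theorem IsPaperRing.isUnit_two {R : Type*} [CommRing R] [IsDomain R] [IsLocalRing R]
    (hR : IsPaperRing R) : IsUnit (2 : R) := by
  rcases hR with ⟨hfield, _⟩ | ⟨-, -, -, hchar⟩
  · let := hfield.toField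
    exact isUnit_iff_ne_zero.mpr two_ne_zero
  · rw [← Nat.cast_ofNat, IsLocalRing.isUnit_natCast_iff]
    exact fun hdvd ↦ ((Nat.dvd_prime Nat.prime_two).mp hdvd).elim CharP.ringChar_ne_one hchar

theorem exists_annihilator_of_isRSemisimpleMatrix {R : Type*} [CommRing R] [IsDomain R]
    [IsLocalRing R] (hR : IsPaperRing R) {n : ℕ} {γ : Matrix (Fin n) (Fin n) R}
    (hγ : IsRSemisimpleMatrix R γ) {a : R} (ha : a * a = 1) :
    ∃ g : R[X], aeval (Matrix.toLin' γ) ((X - C a) * g) = 0 ∧ IsUnit (g.eval a) := by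
  rcases hγ with ⟨hfield, hss⟩ | ⟨k, hk, hcop, hγk⟩
  · let := hfield.toField
    exact exists_annihilator_of_squarefree (minpoly.aeval R _) hss.minpoly_squarefree a
  · refine exists_annihilator_of_pow_eq_one (m := 2 * k) ?_ (by omega) ?_ ?_
    · rw [← Matrix.toLin'_pow, pow_mul', hγk, one_pow, Matrix.toLin'_one]; rfl
    · rw [Nat.cast_mul, Nat.cast_ofNat]
      exact hR.isUnit_two.mul (IsLocalRing.isUnit_natCast_of_coprime hcop)
    · rw [pow_mul, sq, ha, one_pow]

namespace Matrix

variable {R : Type*} [CommRing R] {n : Type*} [Fintype n] [DecidableEq n]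

theorem bijective_toLin'_of_isUnit {A : Matrix n n R} (hA : IsUnit A) :
    Function.Bijective (toLin' A) :=
  (Module.End.isUnit_iff _).mp (hA.map toLinAlgEquiv')

theorem toLinearMap₂'_mul (A C : Matrix n n R) :
    (toLinearMap₂' R (A * C) : LinearMap.BilinForm R (n → R)) =
      (toLinearMap₂' R A).compl₂ (toLin' C) := by
  refine LinearMap.ext₂ fun x y ↦ ?_
  simp [toLinearMap₂'_apply', mulVec_mulVec]

theorem ker_toLin'_mul_of_isUnit {A : Matrix n n R} (hA : IsUnit A) (C : Matrix n n R) :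
    ker (toLin' (A * C)) = ker (toLin' C) := by
  rw [toLin'_mul, LinearMap.ker_comp_of_ker_eq_bot]
  exact LinearMap.ker_eq_bot_of_injective (bijective_toLin'_of_isUnit hA).injective

theorem isPerfPair_toLinearMap₂' {A : Matrix n n R} (hA : IsUnit A) :
    (toLinearMap₂' R A : LinearMap.BilinForm R (n → R)).IsPerfPair := by
  refine .of_bijective _ ?_
  have : (toLinearMap₂' R A : LinearMap.BilinForm R (n → R)) =
      (dotProductEquiv R n).toLinearMap ∘ₗ toLin' Aᵀ := by
    refine LinearMap.ext₂ fun x y ↦ ?_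
    simp [toLinearMap₂'_apply', dotProduct_mulVec, mulVec_transpose]
  rw [this]
  exact (dotProductEquiv R n).bijective.comp
    (bijective_toLin'_of_isUnit ((isUnit_transpose A).mpr hA))

theorem toLinearMap₂'_transpose_toLin'_inv_transpose_mul {h : Matrix n n R} (hh : IsUnit h)
    (x y : n → R) :
    toLinearMap₂' R hᵀ (toLin' ((hᵀ)⁻¹ * h) x) (toLin' ((hᵀ)⁻¹ * h) y) =
      toLinearMap₂' R hᵀ x y := by
  have hdet := (isUnit_iff_isUnit_det h).mp hh
  have : ((hᵀ)⁻¹ * h)ᵀ * hᵀ * ((hᵀ)⁻¹ * h) = hᵀ := by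
    rw [transpose_mul, transpose_nonsing_inv, transpose_transpose, mul_assoc (hᵀ * h⁻¹),
      mul_nonsing_inv_cancel_left _ _ (by rwa [det_transpose]), mul_assoc,
      nonsing_inv_mul _ hdet, mul_one]
  rw [← LinearMap.compl₁₂_apply, toLinearMap₂'_comp, this]

theorem inv_transpose_mul_eq_smul [Invertible (2 : R)] {h p q : Matrix n n R} (hh : IsUnit h)
    (hsum : h = p + q) (hskew : pᵀ = -p) (hsymm : qᵀ = q) :
    (hᵀ)⁻¹ * p = (⅟2 : R) • ((hᵀ)⁻¹ * h - 1) ∧ (hᵀ)⁻¹ * q = (⅟2 : R) • ((hᵀ)⁻¹ * h + 1) := by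
  have hone : (hᵀ)⁻¹ * hᵀ = 1 :=
    nonsing_inv_mul _ (by rwa [det_transpose, ← isUnit_iff_isUnit_det])
  have hsub : h - hᵀ = (2 : R) • p := by
    rw [hsum, transpose_add, hskew, hsymm, two_smul]; abel
  have hadd : h + hᵀ = (2 : R) • q := by
    rw [hsum, transpose_add, hskew, hsymm, two_smul]; abel
  rw [← hone, ← mul_sub, ← mul_add, hsub, hadd]
  simp only [mul_smul_comm, smul_smul, invOf_mul_self, one_smul, and_self]

end Matrix

/-- For an `R`-Θ-semisimple `h = p + q` (skew part `p`, symmetric part `q`), the module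
`M = Rⁿ` decomposes as `M₊ ⊕ M₋ ⊕ M₀`, where `M₊ = ker p`, `M₋ = ker q` and `M₀` is the
intersection of the `q`-orthogonal complement of `M₊` with the `p`-orthogonal complement of
`M₋`; the restrictions `q|M₊`, `p|M₋`, `q|M₀`, `p|M₀` are unimodular. -/
theorem plus_minus_zero_decomposition
    {R : Type*} [CommRing R] [IsDomain R] [IsLocalRing R] (hR : IsPaperRing R)
    {n : ℕ} (h pm qm : Matrix (Fin n) (Fin n) R) (hinv : IsUnit h)
    (hss : IsRSemisimpleMatrix R ((hᵀ)⁻¹ * h))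
    (hsum : h = pm + qm) (hskew : pmᵀ = -pm) (hsymm : qmᵀ = qm) :
    ∀ (Bp Bq : (Fin n → R) →ₗ[R] (Fin n → R) →ₗ[R] R),
      Bp = Matrix.toLinearMap₂' R pm → Bq = Matrix.toLinearMap₂' R qm →
    ∀ (Mplus Mminus M0 : Submodule R (Fin n → R)),
      Mplus = LinearMap.ker (Matrix.toLin' pm) →
      Mminus = LinearMap.ker (Matrix.toLin' qm) →
      M0 = (Mplus.orthogonalBilin Bq) ⊓ (Mminus.orthogonalBilin Bp) →
      DirectSum.IsInternal ![Mplus, Mminus, M0] ∧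
      IsUnimodularOn Bq Mplus ∧ IsUnimodularOn Bp Mminus ∧
      IsUnimodularOn Bq M0 ∧ IsUnimodularOn Bp M0 := by
  rintro Bp Bq rfl rfl Mplus Mminus M0 rfl rfl hM0
  let := hR.isUnit_two.invertible
  have hT : IsUnit hᵀ := (isUnit_transpose h).mpr hinv
  have := isPerfPair_toLinearMap₂' hT
  obtain ⟨hp, hq⟩ := inv_transpose_mul_eq_smul hinv hsum hskew hsymm
  have hTdet := (isUnit_iff_isUnit_det _).mp hT
  rw [← mul_nonsing_inv_cancel_left (A := hᵀ) pm hTdet,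
    ← mul_nonsing_inv_cancel_left (A := hᵀ) qm hTdet] at hM0 ⊢
  simp only [toLinearMap₂'_mul, ker_toLin'_mul_of_isUnit hT] at hM0 ⊢
  exact isInternal_and_isUnimodularOn_of_isometry _
    (toLinearMap₂'_transpose_toLin'_inv_transpose_mul hinv)
    (exists_annihilator_of_isRSemisimpleMatrix hR hss (one_mul 1))
    (exists_annihilator_of_isRSemisimpleMatrix hR hss (by norm_num))
    (by rw [hp, map_smul, map_sub, toLin'_one]; rfl)
    (by rw [hq, map_smul, map_add, toLin'_one]; rfl) hM0
end

section
/- (Orthogonal Cayley transformation) Let q ∈ GL_n(R) be symmetric. The map C̃ : p ↦ (p−q)^{-1}(q+p) is a bijection from the set of skew-symmetric matrices p with p ± q ∈ GL_n(R) to the set of orthogonal transformations b ∈ O(q,R) with b − 1 ∈ GL_n(R), with inverse b ↦ q(b+1)(b−1)^{-1}; moreover every such b satisfies det(b) = (−1)^n. -/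
/-!
For `b = (p - q)⁻¹ (q + p)` and `p = q (b + 1) (b - 1)⁻¹` one has `b - 1 = (p - q)⁻¹ (2q)` and
`p - q = 2q (b - 1)⁻¹`, so the two maps are mutually inverse between `{p | p - q invertible}` and
`{b | b - 1 invertible}`. Expanding `b = 1 + (p - q)⁻¹ (2q)` gives
`bᵀ q b = q + 2 q (p - q)⁻ᵀ (pᵀ + p) (p - q)⁻¹ q`, so `b` is `q`-orthogonal exactly when `p` is
skew-symmetric. For skew `p`, `(p - q) b = q + p = -(p - q)ᵀ`, whence `det b = (-1)ⁿ`.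
-/

open Matrix

namespace Matrix

lemma add_eq_neg_transpose_sub {ι α : Type*} [AddCommGroup α] {p q : Matrix ι ι α}
    (hqT : qᵀ = q) (hp : pᵀ = -p) : p + q = -(p - q)ᵀ := by
  rw [transpose_sub, hp, hqT]
  abel

variable {ι R : Type*} [Fintype ι] [DecidableEq ι] [CommRing R] {p q b : Matrix ι ι R}

noncomputable def cayley (q p : Matrix ι ι R) : Matrix ι ι R := (p - q)⁻¹ * (q + p)

noncomputable def cayleyInv (q b : Matrix ι ι R) : Matrix ι ι R := q * (b + 1) * (b - 1)⁻¹

lemma cayley_sub_one (hpq : IsUnit (p - q)) : cayley q p - 1 = (p - q)⁻¹ * (2 * q) := by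
  rw [cayley, ← nonsing_inv_mul _ ((isUnit_iff_isUnit_det _).mp hpq), ← mul_sub]
  congr 1
  noncomm_ring

lemma cayleyInv_sub (hb : IsUnit (b - 1)) : cayleyInv q b - q = 2 * q * (b - 1)⁻¹ := by
  calc cayleyInv q b - q = (q * (b + 1) - q * (b - 1)) * (b - 1)⁻¹ := by
        rw [cayleyInv, sub_mul, mul_nonsing_inv_cancel_right _ _ ((isUnit_iff_isUnit_det _).mp hb)]
    _ = 2 * q * (b - 1)⁻¹ := by noncomm_ring

lemma transpose_cayley_mul_mul_cayley (hqT : qᵀ = q) (hpq : IsUnit (p - q)) :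
    (cayley q p)ᵀ * q * cayley q p =
      q + 2 * (q * (p - q)⁻¹ᵀ * (pᵀ + p) * (p - q)⁻¹ * q) := by
  set s := (p - q)⁻¹
  have hb : cayley q p = 1 + s * (2 * q) := eq_add_of_sub_eq' (cayley_sub_one hpq)
  have hbT : (cayley q p)ᵀ = 1 + 2 * q * sᵀ := by
    rw [hb, transpose_add, transpose_one, transpose_mul, transpose_mul, hqT, transpose_ofNat]
    noncomm_ring
  have hxs : (p - q) * s = 1 := mul_nonsing_inv _ ((isUnit_iff_isUnit_det _).mp hpq)
  have hsxT : sᵀ * (p - q)ᵀ = 1 := by rw [← transpose_mul, hxs, transpose_one]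
  have hsum : pᵀ + p = (p - q)ᵀ + (p - q) + 2 * q := by
    rw [transpose_sub, hqT]
    noncomm_ring
  have hexpand : q * sᵀ * ((p - q)ᵀ + (p - q) + 2 * q) * s * q =
      q * (sᵀ * (p - q)ᵀ) * s * q + q * sᵀ * ((p - q) * s) * q + 2 * (q * sᵀ * q * s * q) := by
    noncomm_ring
  rw [hbT, hb, hsum, hexpand, hxs, hsxT]
  noncomm_ring

lemma transpose_cayley_mul_mul_cayley_of_transpose_eq_neg (hqT : qᵀ = q) (hp : pᵀ = -p)
    (hpq : IsUnit (p - q)) : (cayley q p)ᵀ * q * cayley q p = q := by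
  simp [transpose_cayley_mul_mul_cayley hqT hpq, hp]

lemma isUnit_add_of_isUnit_sub (hqT : qᵀ = q) (hp : pᵀ = -p) (hpq : IsUnit (p - q)) :
    IsUnit (p + q) := by
  rw [add_eq_neg_transpose_sub hqT hp]
  exact ((isUnit_transpose _).2 hpq).neg

lemma det_cayley (hqT : qᵀ = q) (hp : pᵀ = -p) (hpq : IsUnit (p - q)) :
    (cayley q p).det = (-1) ^ Fintype.card ι := by
  have hdet := (isUnit_iff_isUnit_det _).mp hpq
  have h : (p - q) * cayley q p = -(p - q)ᵀ := by
    rw [cayley, mul_nonsing_inv_cancel_left _ _ hdet, add_comm, add_eq_neg_transpose_sub hqT hp]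
  have h' := congrArg det h
  rw [det_mul, det_neg, det_transpose] at h'
  exact hdet.mul_left_cancel (h'.trans (mul_comm _ _))

variable [Invertible (2 : R)]

lemma isUnit_two : IsUnit (2 : Matrix ι ι R) :=
  (isUnit_of_invertible (2 : R)).map (algebraMap R (Matrix ι ι R))

lemma isUnit_cayley_sub_one (hq : IsUnit q) (hpq : IsUnit (p - q)) :
    IsUnit (cayley q p - 1) := by
  rw [cayley_sub_one hpq]
  exact (isUnit_nonsing_inv_iff.2 hpq).mul (isUnit_two.mul hq)

lemma isUnit_cayleyInv_sub (hq : IsUnit q) (hb : IsUnit (b - 1)) :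
    IsUnit (cayleyInv q b - q) := by
  rw [cayleyInv_sub hb]
  exact (isUnit_two.mul hq).mul (isUnit_nonsing_inv_iff.2 hb)

lemma cayleyInv_cayley (hq : IsUnit q) (hpq : IsUnit (p - q)) : cayleyInv q (cayley q p) = p := by
  have h := cayleyInv_sub (q := q) (isUnit_cayley_sub_one hq hpq)
  rw [cayley_sub_one hpq, mul_inv_rev, nonsing_inv_nonsing_inv _ ((isUnit_iff_isUnit_det _).mp hpq),
    mul_nonsing_inv_cancel_left _ _ ((isUnit_iff_isUnit_det _).mp (isUnit_two.mul hq))] at h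
  exact sub_left_inj.mp h

lemma cayley_cayleyInv (hq : IsUnit q) (hb : IsUnit (b - 1)) : cayley q (cayleyInv q b) = b := by
  have h := cayley_sub_one (isUnit_cayleyInv_sub hq hb)
  rw [cayleyInv_sub hb, mul_inv_rev, nonsing_inv_nonsing_inv _ ((isUnit_iff_isUnit_det _).mp hb),
    nonsing_inv_mul_cancel_right _ _ ((isUnit_iff_isUnit_det _).mp (isUnit_two.mul hq))] at h
  exact sub_left_inj.mp h

lemma transpose_cayleyInv (hqT : qᵀ = q) (hq : IsUnit q) (hb : bᵀ * q * b = q)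
    (hb1 : IsUnit (b - 1)) : (cayleyInv q b)ᵀ = -cayleyInv q b := by
  have hpq := isUnit_cayleyInv_sub hq hb1
  have hs := isUnit_nonsing_inv_iff.2 hpq
  have h := transpose_cayley_mul_mul_cayley hqT hpq
  rw [cayley_cayleyInv hq hb1, hb, left_eq_add, isUnit_two.mul_right_eq_zero,
    hq.mul_left_eq_zero, hs.mul_left_eq_zero,
    (hq.mul ((isUnit_transpose _).2 hs)).mul_right_eq_zero] at h
  exact eq_neg_of_add_eq_zero_left h

end Matrix

/-- The orthogonal Cayley transformation: for a symmetric `q ∈ GLₙ(R)`, the map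
`p ↦ (p − q)⁻¹ (q + p)` is a bijection from the skew-symmetric matrices `p` with `p ± q`
invertible onto the orthogonal transformations `b` (w.r.t. `q`) with `b − 1` invertible,
with inverse `b ↦ q (b + 1) (b − 1)⁻¹`; moreover every such `b` has `det b = (−1)ⁿ`. -/
theorem orthogonal_cayley_transformation {R : Type*} [CommRing R] [Invertible (2 : R)]
    {n : ℕ} (q : Matrix (Fin n) (Fin n) R) (hsymm : qᵀ = q) (hq : IsUnit q) :
    Set.BijOn (fun p : Matrix (Fin n) (Fin n) R => (p - q)⁻¹ * (q + p))
      {p | pᵀ = -p ∧ IsUnit (p - q) ∧ IsUnit (p + q)}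
      {b | bᵀ * q * b = q ∧ IsUnit (b - 1)} ∧
    (∀ p : Matrix (Fin n) (Fin n) R, pᵀ = -p → IsUnit (p - q) → IsUnit (p + q) →
      q * ((p - q)⁻¹ * (q + p) + 1) * ((p - q)⁻¹ * (q + p) - 1)⁻¹ = p) ∧
    (∀ b : Matrix (Fin n) (Fin n) R, bᵀ * q * b = q → IsUnit (b - 1) →
      ((q * (b + 1) * (b - 1)⁻¹ - q)⁻¹ * (q + q * (b + 1) * (b - 1)⁻¹) = b)) ∧
    (∀ b : Matrix (Fin n) (Fin n) R, bᵀ * q * b = q → IsUnit (b - 1) →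
      b.det = (-1 : R) ^ n) := by
  have hmaps : Set.MapsTo (cayley q) {p | pᵀ = -p ∧ IsUnit (p - q) ∧ IsUnit (p + q)}
      {b | bᵀ * q * b = q ∧ IsUnit (b - 1)} := fun p ⟨hp, hpq, _⟩ =>
    ⟨transpose_cayley_mul_mul_cayley_of_transpose_eq_neg hsymm hp hpq,
      isUnit_cayley_sub_one hq hpq⟩
  have hmapsInv : Set.MapsTo (cayleyInv q) {b | bᵀ * q * b = q ∧ IsUnit (b - 1)}
      {p | pᵀ = -p ∧ IsUnit (p - q) ∧ IsUnit (p + q)} := fun b ⟨hb, hb1⟩ =>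
    have hp := transpose_cayleyInv hsymm hq hb hb1
    have hpq := isUnit_cayleyInv_sub hq hb1
    ⟨hp, hpq, isUnit_add_of_isUnit_sub hsymm hp hpq⟩
  have hinv : Set.InvOn (cayleyInv q) (cayley q) {p | pᵀ = -p ∧ IsUnit (p - q) ∧ IsUnit (p + q)}
      {b | bᵀ * q * b = q ∧ IsUnit (b - 1)} :=
    ⟨fun p hp => cayleyInv_cayley hq hp.2.1, fun b hb => cayley_cayleyInv hq hb.2⟩
  refine ⟨hinv.bijOn hmaps hmapsInv, fun p _ hpq _ => cayleyInv_cayley hq hpq,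
    fun b _ hb1 => cayley_cayleyInv hq hb1, fun b hb hb1 => ?_⟩
  obtain ⟨hp, hpq, -⟩ := hmapsInv ⟨hb, hb1⟩
  rw [← cayley_cayleyInv hq hb1, det_cayley hsymm hp hpq, Fintype.card_fin]
end

section
/- Let b ∈ GL_n(R) satisfy b − b^{-1} ∈ GL_n(R). If q ∈ GL_n(R) is symmetric with ᵗb q b = q, then p := q(b − b^{-1}) is a unimodular skew-symmetric matrix and ᵗb p b = p. Conversely, if p ∈ GL_n(R) is skew-symmetric with ᵗb p b = p, then q := p(b − b^{-1})^{-1} is a unimodular symmetric matrix, ᵗb q b = q, and det(b) = 1. -/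
open Matrix

/-- Passing between invariant symmetric and skew-symmetric forms for `b` with `b − b⁻¹`
invertible: if `ᵗb q b = q` with `q` symmetric invertible then `p = q (b − b⁻¹)` is an
invertible skew-symmetric matrix with `ᵗb p b = p`; conversely if `ᵗb p b = p` with `p`
skew-symmetric invertible then `q = p (b − b⁻¹)⁻¹` is an invertible symmetric matrix with
`ᵗb q b = q`, and `det b = 1`. -/
theorem symmetric_skew_shift {R : Type*} [CommRing R] [Invertible (2 : R)] {n : ℕ}
    (b : Matrix (Fin n) (Fin n) R) (hb : IsUnit b) (hbb : IsUnit (b - b⁻¹)) :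
    (∀ q : Matrix (Fin n) (Fin n) R, qᵀ = q → IsUnit q → bᵀ * q * b = q →
      ((q * (b - b⁻¹))ᵀ = -(q * (b - b⁻¹)) ∧ IsUnit (q * (b - b⁻¹)) ∧
        bᵀ * (q * (b - b⁻¹)) * b = q * (b - b⁻¹))) ∧
    (∀ p : Matrix (Fin n) (Fin n) R, pᵀ = -p → IsUnit p → bᵀ * p * b = p →
      ((p * (b - b⁻¹)⁻¹)ᵀ = p * (b - b⁻¹)⁻¹ ∧ IsUnit (p * (b - b⁻¹)⁻¹) ∧
        bᵀ * (p * (b - b⁻¹)⁻¹) * b = p * (b - b⁻¹)⁻¹ ∧ b.det = 1)) := by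
  set c : Matrix (Fin n) (Fin n) R := b - b⁻¹ with hc
  have hbd : IsUnit b.det := (isUnit_iff_isUnit_det b).mp hb
  have hcd : IsUnit c.det := (isUnit_iff_isUnit_det c).mp hbb
  have hbi : b * b⁻¹ = 1 := mul_nonsing_inv b hbd
  have hib : b⁻¹ * b = 1 := nonsing_inv_mul b hbd
  have hbtd : IsUnit bᵀ.det := by rwa [det_transpose]
  have hctd : IsUnit cᵀ.det := by rwa [det_transpose]
  -- b commutes with c
  have hcomm : b * c = c * b := by
    simp only [hc, mul_sub, sub_mul, hbi, hib]
  have hcomm' : b⁻¹ * c⁻¹ * b = c⁻¹ := by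
    have h1 : c⁻¹ * b = b * c⁻¹ := by
      have h0 := congrArg (fun X => c⁻¹ * X * c⁻¹) hcomm
      simp only [mul_assoc] at h0
      rw [nonsing_inv_mul_cancel_left c _ hcd] at h0
      simp only [← mul_assoc] at h0
      rw [mul_nonsing_inv_cancel_right c _ hcd] at h0
      exact h0
    rw [mul_assoc, h1, ← mul_assoc, hib, one_mul]
  constructor
  · intro q hq hqu hinv
    have key1 : bᵀ * q = q * b⁻¹ := by
      have := congrArg (fun X => X * b⁻¹) hinv
      simpa only [mul_nonsing_inv_cancel_right b _ hbd] using this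
    have key2 : q * b = bᵀ⁻¹ * q := by
      conv_rhs => rw [← hinv]
      rw [← mul_assoc, ← mul_assoc, nonsing_inv_mul bᵀ hbtd, one_mul]
    refine ⟨?_, hqu.mul hbb, ?_⟩
    · rw [transpose_mul, hq, hc, transpose_sub, transpose_nonsing_inv, sub_mul,
        key1, ← key2]
      noncomm_ring
    · calc bᵀ * (q * c) * b = (bᵀ * q) * (c * b) := by noncomm_ring
        _ = q * (b⁻¹ * (b * c)) := by rw [key1, hcomm]; noncomm_ring
        _ = q * c := by rw [← Matrix.mul_assoc b⁻¹ b c, hib, one_mul]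
  · intro p hp hpu hinv
    have hpd : IsUnit p.det := (isUnit_iff_isUnit_det p).mp hpu
    have key1 : bᵀ * p = p * b⁻¹ := by
      have := congrArg (fun X => X * b⁻¹) hinv
      simpa only [mul_nonsing_inv_cancel_right b _ hbd] using this
    have key2 : p * b = bᵀ⁻¹ * p := by
      conv_rhs => rw [← hinv]
      rw [← mul_assoc, ← mul_assoc, nonsing_inv_mul bᵀ hbtd, one_mul]
    -- cᵀ * p = -(p * c)
    have hcT : cᵀ * p = -(p * c) := by
      rw [hc, transpose_sub, transpose_nonsing_inv, sub_mul, key1, ← key2]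
      noncomm_ring
    -- symmetry of q = p * c⁻¹
    have hsymm : (p * c⁻¹)ᵀ = p * c⁻¹ := by
      have hnp : -p = cᵀ * p * c⁻¹ := by
        rw [hcT, neg_mul, mul_nonsing_inv_cancel_right c _ hcd]
      rw [transpose_mul, transpose_nonsing_inv, hp, hnp, ← mul_assoc, ← mul_assoc,
        nonsing_inv_mul cᵀ hctd, one_mul]
    have hcinv : IsUnit c⁻¹ := (isUnit_nonsing_inv_iff).mpr hbb
    -- (-1)^n = 1 in R
    have hneg : ((-1 : R)) ^ n = 1 := by
      have h1 : p.det = (-1 : R) ^ n * p.det := by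
        conv_lhs => rw [← det_transpose, hp, det_neg]
        simp [Fintype.card_fin]
      have := h1.symm
      rw [← one_mul p.det] at this
      exact hpd.mul_right_cancel (by linear_combination this)
    -- det (1 - b) is a unit
    have hfac : c = b⁻¹ * ((b - 1) * (b + 1)) := by
      have hsq : (b - 1) * (b + 1) = b * b - 1 := by noncomm_ring
      rw [hc, hsq, mul_sub, ← mul_assoc, hib, one_mul, mul_one]
    have hdet1b : IsUnit (1 - b).det := by
      have : IsUnit ((b - 1) * (b + 1)).det := by
        have h2 : IsUnit (b⁻¹ * ((b - 1) * (b + 1))).det := hfac ▸ hcd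
        rw [det_mul] at h2
        exact (isUnit_of_mul_isUnit_right h2)
      rw [det_mul] at this
      have h3 : IsUnit (b - 1).det := isUnit_of_mul_isUnit_left this
      have h4 : (1 - b) = -(b - 1) := (neg_sub _ _).symm
      rw [h4, det_neg, Fintype.card_fin, hneg, one_mul]
      exact h3
    -- det b = 1
    have hbt : bᵀ = p * b⁻¹ * p⁻¹ := by
      rw [← key1, mul_nonsing_inv_cancel_right p _ hpd]
    have hdetb : b.det = 1 := by
      have hsim : ((1 : Matrix (Fin n) (Fin n) R) - b).det
          = b⁻¹.det * (1 - b).det := by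
        calc ((1 : Matrix (Fin n) (Fin n) R) - b).det
            = ((1 : Matrix (Fin n) (Fin n) R) - b)ᵀ.det := (det_transpose _).symm
          _ = ((1 : Matrix (Fin n) (Fin n) R) - bᵀ).det := by rw [transpose_sub, transpose_one]
          _ = (p * (1 - b⁻¹) * p⁻¹).det := by
              rw [hbt]; congr 1
              rw [mul_sub, sub_mul, mul_one, mul_nonsing_inv p hpd]
          _ = (1 - b⁻¹).det * (p.det * p⁻¹.det) := by rw [det_mul, det_mul]; ring
          _ = (1 - b⁻¹).det := by
              rw [← det_mul, mul_nonsing_inv p hpd, det_one, mul_one]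
          _ = (b⁻¹ * (b - 1)).det := by
              congr 1; rw [mul_sub, hib, mul_one]
          _ = b⁻¹.det * (1 - b).det := by
              rw [det_mul]
              congr 1
              have h4 : (b - 1) = -(1 - b) := (neg_sub _ _).symm
              rw [h4, det_neg, Fintype.card_fin, hneg, one_mul]
      have h5 : b⁻¹.det = 1 := by
        have := hsim
        nth_rewrite 1 [← one_mul ((1:Matrix (Fin n) (Fin n) R) - b).det] at this
        exact (hdet1b.mul_left_cancel (by linear_combination this)).symm
      have h6 : b.det * b⁻¹.det = 1 := by rw [← det_mul, hbi, det_one]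
      rw [h5, mul_one] at h6
      exact h6
    refine ⟨hsymm, hpu.mul hcinv, ?_, hdetb⟩
    calc bᵀ * (p * c⁻¹) * b = (bᵀ * p) * (c⁻¹ * b) := by noncomm_ring
      _ = p * (b⁻¹ * c⁻¹ * b) := by rw [key1]; noncomm_ring
      _ = p * c⁻¹ := by rw [hcomm']
end
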